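/- arXiv:1709.06965 — 8 statements merged into one kernel-verified Lean document; each statement's English description precedes it below -/
import Mathlib

section
/- For all positive integers p and q, the bisection width of the complete bipartite graph K_{p,q} equals ⌈pq/2⌉; that is, the minimum over all bisections (W₁, W₂) of K_{p,q} of the number of edges between W₁ and W₂ is ⌈pq/2⌉. Equivalently, if the bisection contains r vertices of the size-p side and s vertices of the size-q side in W₁ (with r + s = ⌊(p+q)/2⌋, 0 ≤ r ≤ p, 0 ≤ s ≤ q), the width is r(q−s) + s(p−r), and the minimum of this quantity over all such r, s is ⌈pq/2⌉. -/
open Set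

noncomputable section

/-- The number of edges of `G` with one endpoint in `W` and the other endpoint outside `W`. -/
def cutWidth {V : Type*} (G : SimpleGraph V) (W : Finset V) : ℕ :=
  {e ∈ G.edgeSet | ∃ u ∈ W, ∃ v, v ∉ W ∧ e = s(u, v)}.ncard

lemma cutWidth_eq (p q : ℕ) (W : Finset (Fin p ⊕ Fin q)) :
    cutWidth (completeBipartiteGraph (Fin p) (Fin q)) W
      = W.toLeft.card * (q - W.toRight.card) + (p - W.toLeft.card) * W.toRight.card := by
  classical
  have hinj : Function.Injective
      (fun ab : Fin p × Fin q => s(Sum.inl ab.1, (Sum.inr ab.2 : Fin p ⊕ Fin q))) := by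
    rintro ⟨a, b⟩ ⟨a', b'⟩ h
    rw [Sym2.eq_iff] at h
    rcases h with ⟨h1, h2⟩ | ⟨h1, h2⟩
    · exact Prod.ext (Sum.inl_injective h1) (Sum.inr_injective h2)
    · simp at h1
  have hset : {e ∈ (completeBipartiteGraph (Fin p) (Fin q)).edgeSet |
      ∃ u ∈ W, ∃ v, v ∉ W ∧ e = s(u, v)}
      = ↑((W.toLeft ×ˢ W.toRightᶜ ∪ W.toLeftᶜ ×ˢ W.toRight).image
          (fun ab => s(Sum.inl ab.1, Sum.inr ab.2))) := by
    ext e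
    induction e using Sym2.ind with
    | _ x y =>
      simp only [Set.mem_setOf_eq, Finset.coe_image, Set.mem_image, Finset.mem_coe,
        Finset.mem_union, Finset.mem_product, Finset.mem_compl, Finset.mem_toLeft,
        Finset.mem_toRight, SimpleGraph.mem_edgeSet, completeBipartiteGraph_adj]
      constructor
      · rintro ⟨hadj, u, hu, v, hv, he⟩
        rcases x with a | a <;> rcases y with b | b
        · simp at hadj
        · rw [Sym2.eq_iff] at he
          rcases he with ⟨h1, h2⟩ | ⟨h1, h2⟩ <;> subst h1 <;> subst h2
          · exact ⟨(a, b), Or.inl ⟨hu, hv⟩, rfl⟩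
          · exact ⟨(a, b), Or.inr ⟨hv, hu⟩, rfl⟩
        · rw [Sym2.eq_iff] at he
          rcases he with ⟨h1, h2⟩ | ⟨h1, h2⟩ <;> subst h1 <;> subst h2
          · exact ⟨(b, a), Or.inr ⟨hv, hu⟩, Sym2.eq_swap⟩
          · exact ⟨(b, a), Or.inl ⟨hu, hv⟩, Sym2.eq_swap⟩
        · simp at hadj
      · rintro ⟨⟨a, b⟩, hab, he⟩
        dsimp only at hab he
        rw [Sym2.eq_iff] at he
        rcases hab with ⟨ha, hb⟩ | ⟨ha, hb⟩ <;>
          rcases he with ⟨h1, h2⟩ | ⟨h1, h2⟩ <;> subst h1 <;> subst h2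
        · exact ⟨by simp, _, ha, _, hb, rfl⟩
        · exact ⟨by simp, _, ha, _, hb, Sym2.eq_swap⟩
        · exact ⟨by simp, _, hb, _, ha, Sym2.eq_swap⟩
        · exact ⟨by simp, _, hb, _, ha, rfl⟩
  have hdisj : Disjoint (W.toLeft ×ˢ W.toRightᶜ) (W.toLeftᶜ ×ˢ W.toRight) := by
    rw [Finset.disjoint_left]
    rintro ⟨a, b⟩ h1 h2
    simp only [Finset.mem_product, Finset.mem_compl] at h1 h2
    exact h2.1 h1.1
  rw [cutWidth, hset, Set.ncard_coe_finset, Finset.card_image_of_injective _ hinj,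
    Finset.card_union_of_disjoint hdisj, Finset.card_product, Finset.card_product,
    Finset.card_compl, Finset.card_compl, Fintype.card_fin, Fintype.card_fin]

lemma lb_aux (p q r s : ℕ) (hr : r ≤ p) (hs : s ≤ q) (h : r + s = (p + q + 1) / 2) :
    (p * q + 1) / 2 ≤ r * (q - s) + (p - r) * s := by
  have key : p * q ≤ 2 * (r * (q - s) + (p - r) * s) := by
    zify [hr, hs]
    have h2 : 2 * (r + s) = p + q ∨ 2 * (r + s) = p + q + 1 := by omega
    have h0 : 0 ≤ ((2 * r : ℤ) - p) * ((q : ℤ) - 2 * s) := by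
      rcases h2 with h | h
      · have ha : (2 * r : ℤ) - p = (q : ℤ) - 2 * s := by omega
        rw [ha]; exact mul_self_nonneg _
      · have ha : (2 * r : ℤ) - p = ((q : ℤ) - 2 * s) + 1 := by omega
        rw [ha]
        rcases le_or_gt 0 ((q : ℤ) - 2 * s) with hb | hb
        · exact mul_nonneg (by linarith) hb
        · have hb1 : (q : ℤ) - 2 * s ≤ -1 := by omega
          have := mul_nonneg (by linarith : (0:ℤ) ≤ -(((q : ℤ) - 2 * s) + 1))
            (by linarith : (0:ℤ) ≤ -((q : ℤ) - 2 * s))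
          nlinarith [this]
    nlinarith [h0]
  omega

/-- For all positive integers `p` and `q`, the bisection width of the complete bipartite
graph `K_{p,q}` equals `⌈pq/2⌉`: the value `⌈pq/2⌉` is the least element of the set of
widths of bisections `(W, Wᶜ)` (with `|W| = ⌈(p+q)/2⌉`, hence `|Wᶜ| = ⌊(p+q)/2⌋`)
of `K_{p,q}`. -/
theorem bisectionWidth_completeBipartiteGraph (p q : ℕ) (hp : 0 < p) (hq : 0 < q) :
    IsLeast {w : ℕ | ∃ W : Finset (Fin p ⊕ Fin q),
        W.card = (p + q + 1) / 2 ∧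
        w = cutWidth (completeBipartiteGraph (Fin p) (Fin q)) W}
      ((p * q + 1) / 2) := by
  classical
  constructor
  · -- membership
    obtain ⟨r, s, hr, hs, hrs, hval⟩ : ∃ r s, r ≤ p ∧ s ≤ q ∧ r + s = (p + q + 1) / 2 ∧
        r * (q - s) + (p - r) * s = (p * q + 1) / 2 := by
      rcases Nat.even_or_odd p with ⟨k, hk⟩ | ⟨k, hk⟩ <;>
        rcases Nat.even_or_odd q with ⟨l, hl⟩ | ⟨l, hl⟩ <;> subst hk <;> subst hl
      · refine ⟨k, l, by omega, by omega, by omega, ?_⟩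
        have h1 : (l + l) - l = l := by omega
        have h2 : (k + k) - k = k := by omega
        rw [h1, h2, show (k + k) * (l + l) = 2 * (k * l + k * l) by ring]
        generalize k * l = m
        omega
      · refine ⟨k, l + 1, by omega, by omega, by omega, ?_⟩
        have h1 : (2 * l + 1) - (l + 1) = l := by omega
        have h2 : (k + k) - k = k := by omega
        rw [h1, h2, show k * (l + 1) = k * l + k by ring,
          show (k + k) * (2 * l + 1) = 2 * (k * l + k * l + k) by ring]
        generalize k * l = m
        omega
      · refine ⟨k + 1, l, by omega, by omega, by omega, ?_⟩
        have h1 : (l + l) - l = l := by omega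
        have h2 : (2 * k + 1) - (k + 1) = k := by omega
        rw [h1, h2, show (k + 1) * l = k * l + l by ring,
          show (2 * k + 1) * (l + l) = 2 * (k * l + k * l + l) by ring]
        generalize k * l = m
        omega
      · refine ⟨k + 1, l, by omega, by omega, by omega, ?_⟩
        have h1 : (2 * l + 1) - l = l + 1 := by omega
        have h2 : (2 * k + 1) - (k + 1) = k := by omega
        rw [h1, h2, show (k + 1) * (l + 1) = k * l + k + l + 1 by ring,
          show (2 * k + 1) * (2 * l + 1) = 2 * (k * l + k * l + k + l) + 1 by ring]
        generalize k * l = m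
        omega
    set A : Finset (Fin p) := (Finset.range r).attachFin
      (fun m hm => lt_of_lt_of_le (Finset.mem_range.mp hm) hr) with hA
    set B : Finset (Fin q) := (Finset.range s).attachFin
      (fun m hm => lt_of_lt_of_le (Finset.mem_range.mp hm) hs) with hB
    have hAcard : A.card = r := by rw [hA, Finset.card_attachFin, Finset.card_range]
    have hBcard : B.card = s := by rw [hB, Finset.card_attachFin, Finset.card_range]
    refine ⟨A.image Sum.inl ∪ B.image Sum.inr, ?_, ?_⟩
    · have hd : Disjoint (A.image (Sum.inl : Fin p → Fin p ⊕ Fin q)) (B.image Sum.inr) := by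
        rw [Finset.disjoint_left]
        rintro x hx hy
        simp only [Finset.mem_image] at hx hy
        obtain ⟨a, _, rfl⟩ := hx
        obtain ⟨b, _, h⟩ := hy
        exact Sum.inr_ne_inl h
      rw [Finset.card_union_of_disjoint hd,
        Finset.card_image_of_injective _ Sum.inl_injective,
        Finset.card_image_of_injective _ Sum.inr_injective, hAcard, hBcard, hrs]
    · have htL : (A.image (Sum.inl : Fin p → Fin p ⊕ Fin q) ∪ B.image Sum.inr).toLeft = A := by
        ext a; simp
      have htR : (A.image (Sum.inl : Fin p → Fin p ⊕ Fin q) ∪ B.image Sum.inr).toRight = B := by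
        ext b; simp
      rw [cutWidth_eq, htL, htR, hAcard, hBcard, hval]
  · -- lower bound
    rintro w ⟨W, hWcard, rfl⟩
    rw [cutWidth_eq]
    refine lb_aux p q _ _ ?_ ?_ ?_
    · exact (Finset.card_le_univ _).trans_eq (by simp)
    · exact (Finset.card_le_univ _).trans_eq (by simp)
    · rw [Finset.card_toLeft_add_card_toRight, hWcard]
end
end

section
/- Let d ≥ 2 and let G be a finite simple graph with n vertices and m edges satisfying m ≥ n ≥ 1. If G admits a crossing-free circular-arc drawing in ℝ^d covered by a family of r circles, then r ≥ ½(1 + √(2m²/n − 2m + 1)). -/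
open Set

noncomputable section

/-- An `l`-dimensional sphere in `ℝ^d`: the set of points of an `(l+1)`-dimensional affine
subspace `P` of `ℝ^d` at a fixed positive distance `r` from a center `c ∈ P`. -/
def IsSphereDim (d l : ℕ) (S : Set (EuclideanSpace ℝ (Fin d))) : Prop :=
  ∃ (P : AffineSubspace ℝ (EuclideanSpace ℝ (Fin d))) (c : EuclideanSpace ℝ (Fin d)) (r : ℝ),
    Module.finrank ℝ P.direction = l + 1 ∧ c ∈ P ∧ 0 < r ∧
    S = {x | x ∈ P ∧ dist x c = r}

/-- A circle in `ℝ^d` is a 1-dimensional sphere. -/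
def IsCircle (d : ℕ) (S : Set (EuclideanSpace ℝ (Fin d))) : Prop :=
  IsSphereDim d 1 S

/-- An arc in `ℝ^d`: a nonempty compact connected subset of a circle. -/
def IsArc (d : ℕ) (A : Set (EuclideanSpace ℝ (Fin d))) : Prop :=
  ∃ C, IsCircle d C ∧ A ⊆ C ∧ IsCompact A ∧ IsConnected A

/-- A crossing-free circular-arc drawing of a simple graph `G` in `ℝ^d`:
vertices are mapped injectively to points, every edge `e = uv` is represented by an arc
`arc e` containing the images of `u` and `v`, the arcs of two distinct edges intersect
exactly in the images of the common endpoints of those edges, and the image of a vertex `w`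
lies on the arc of an edge `e` only if `w` is an endpoint of `e`. -/
structure CircularArcDrawing (d : ℕ) {V : Type*} (G : SimpleGraph V) where
  pos : V → EuclideanSpace ℝ (Fin d)
  inj : Function.Injective pos
  arc : Sym2 V → Set (EuclideanSpace ℝ (Fin d))
  arc_isArc : ∀ e ∈ G.edgeSet, IsArc d (arc e)
  endpoint_mem : ∀ e ∈ G.edgeSet, ∀ v ∈ e, pos v ∈ arc e
  crossFree : ∀ e ∈ G.edgeSet, ∀ f ∈ G.edgeSet, e ≠ f →
    arc e ∩ arc f = pos '' {w | w ∈ e ∧ w ∈ f}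
  vertex_mem : ∀ e ∈ G.edgeSet, ∀ w, pos w ∈ arc e → w ∈ e

/-- The drawing `D` is covered by the family `𝒞` of sets:
every arc of `D` is contained in some member of `𝒞`. -/
def CircularArcDrawing.CoveredBy {d : ℕ} {V : Type*} {G : SimpleGraph V}
    (D : CircularArcDrawing d G) (𝒞 : Finset (Set (EuclideanSpace ℝ (Fin d)))) : Prop :=
  ∀ e ∈ G.edgeSet, ∃ C ∈ 𝒞, D.arc e ⊆ C

/-!
Let `t v` be the number of circles of `𝒞` through the vertex `v`. Three arcs of one circle cannot
pairwise meet only in a common endpoint, so a circle carries at most as many edges as vertices,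
and `m ≤ ∑ t v`. Two distinct circles share at most two points, so counting pairs of circles
through each vertex gives `∑ t v (t v - 1) ≤ 2 r (r - 1)`. With Cauchy–Schwarz,
`(∑ t v)² ≤ n ∑ t v²`, this yields `m² ≤ n m + 2 n r (r - 1)`, which rearranges to the bound.
-/

open Complex Filter Topology Metric Real

namespace Complex

lemma arg_exp_mul_I_of_mem_Ioc {θ : ℝ} (hθ : θ ∈ Ioc (-π) π) : arg (exp (θ * I)) = θ := by
  rw [exp_mul_I]
  exact arg_cos_add_sin_mul_I hθ

lemma exp_arg_mul_I_of_norm_eq_one {z : ℂ} (hz : ‖z‖ = 1) : exp (arg z * I) = z := by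
  simpa [hz] using norm_mul_exp_arg_mul_I z

lemma exp_mul_I_ne_neg_one {θ : ℝ} (hθ : θ ∈ Ioo (-π) π) : exp (θ * I) ≠ -1 := fun h => by
  have := arg_exp_mul_I_of_mem_Ioc (Ioo_subset_Ioc_self hθ)
  rw [h, arg_neg_one] at this
  exact hθ.2.ne' this

lemma exp_mul_I_mem_slitPlane {θ : ℝ} (hθ : θ ∈ Ioo (-π) π) : exp (θ * I) ∈ slitPlane := by
  rw [mem_slitPlane_iff_arg, arg_exp_mul_I_of_mem_Ioc (Ioo_subset_Ioc_self hθ)]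
  exact ⟨hθ.2.ne, exp_ne_zero _⟩

/-- The points at angles `l < u` cut the unit circle into two open arcs, one through the angles
in `(l, u)`, the other through `-1`. -/
lemma neg_one_notMem_of_isPreconnected {B : Set ℂ} (hB : IsPreconnected B)
    (hBs : B ⊆ sphere 0 1) {l θ u : ℝ} (hl : -π < l) (hlθ : l < θ) (hθu : θ < u) (hu : u < π)
    (hθ : exp (θ * I) ∈ B) (hlB : exp (l * I) ∉ B) (huB : exp (u * I) ∉ B) :
    (-1 : ℂ) ∉ B := by
  intro hm
  have hIoo : Ioo l u ⊆ Ioo (-π) π := Ioo_subset_Ioo hl.le hu.le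
  set O : Set ℂ := slitPlane ∩ arg ⁻¹' Ioo l u
  set K : Set ℂ := (fun φ : ℝ => exp (φ * I)) '' Icc l u
  have hO : IsOpen O := (continuousOn_arg.mono fun _ hz => hz).isOpen_inter_preimage
    isOpen_slitPlane isOpen_Ioo
  have hK : IsClosed K := (isCompact_Icc.image (by fun_prop)).isClosed
  have hBO : B ∩ O ⊆ K := fun z ⟨hzB, _, hz⟩ =>
    ⟨arg z, Ioo_subset_Icc_self hz, exp_arg_mul_I_of_norm_eq_one (by simpa using hBs hzB)⟩
  have hBK : B ⊆ O ∪ Kᶜ := by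
    rintro z hzB
    by_cases hzK : z ∈ K
    · obtain ⟨φ, hφ, rfl⟩ := hzK
      have hφ' : φ ∈ Ioo l u :=
        ⟨hφ.1.lt_of_ne (by rintro rfl; exact hlB hzB),
          hφ.2.lt_of_ne (by rintro rfl; exact huB hzB)⟩
      refine .inl ⟨exp_mul_I_mem_slitPlane (hIoo hφ'), ?_⟩
      rwa [mem_preimage, arg_exp_mul_I_of_mem_Ioc (Ioo_subset_Ioc_self (hIoo hφ'))]
    · exact .inr hzK
  have hθO : exp (θ * I) ∈ O := by
    refine ⟨exp_mul_I_mem_slitPlane (hIoo ⟨hlθ, hθu⟩), ?_⟩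
    rw [mem_preimage, arg_exp_mul_I_of_mem_Ioc (Ioo_subset_Ioc_self (hIoo ⟨hlθ, hθu⟩))]
    exact ⟨hlθ, hθu⟩
  have hmK : (-1 : ℂ) ∉ K := by
    rintro ⟨φ, hφ, hφm⟩
    exact exp_mul_I_ne_neg_one ⟨hl.trans_le hφ.1, hφ.2.trans_lt hu⟩ hφm
  obtain ⟨z, hzB, hzO, hzK⟩ := hB O Kᶜ hO hK.isOpen_compl hBK ⟨_, hθ, hθO⟩ ⟨-1, hm, hmK⟩
  exact hzK (hBO ⟨hzB, hzO⟩)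

lemma eventually_exp_mul_I_mem_of_isPreconnected {B : Set ℂ} (hB : IsPreconnected B)
    (hBs : B ⊆ sphere 0 1) (hm : (-1 : ℂ) ∈ B) (hnt : B.Nontrivial) :
    (∀ᶠ θ : ℝ in 𝓝[<] π, exp (θ * I) ∈ B) ∨ ∀ᶠ θ : ℝ in 𝓝[>] (-π), exp (θ * I) ∈ B := by
  obtain ⟨q, hqB, hq⟩ := hnt.exists_ne (-1)
  have hq1 : ‖q‖ = 1 := by simpa using hBs hqB
  have hqπ : arg q < π := (arg_mem_Ioc q).2.lt_of_ne fun h => hq <| by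
    rw [← exp_arg_mul_I_of_norm_eq_one hq1, h, exp_pi_mul_I]
  by_contra! h
  obtain ⟨u, huB, hu⟩ := (h.1.and_eventually (Ioo_mem_nhdsLT hqπ)).exists
  obtain ⟨l, hlB, hl⟩ := (h.2.and_eventually (Ioo_mem_nhdsGT (arg_mem_Ioc q).1)).exists
  exact neg_one_notMem_of_isPreconnected hB hBs hl.1 hl.2 hu.1 hu.2
    (by rwa [exp_arg_mul_I_of_norm_eq_one hq1]) hlB huB hm

lemma exists_mem_inter_ne_neg_one {F : Filter ℝ} [F.NeBot] (hF : ∀ᶠ θ : ℝ in F, θ ∈ Ioo (-π) π)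
    {B B' : Set ℂ} (hB : ∀ᶠ θ : ℝ in F, exp (θ * I) ∈ B) (hB' : ∀ᶠ θ : ℝ in F, exp (θ * I) ∈ B') :
    ∃ z ∈ B ∩ B', z ≠ -1 :=
  let ⟨_, hθ, hθB, hθB'⟩ := (hF.and (hB.and hB')).exists
  ⟨_, ⟨hθB, hθB'⟩, exp_mul_I_ne_neg_one hθ⟩

theorem card_le_two_of_isPreconnected_of_inter_subset {ι : Type*} {s : Finset ι}
    {B : ι → Set ℂ} (hB : ∀ i ∈ s, IsPreconnected (B i)) (hBs : ∀ i ∈ s, B i ⊆ sphere 0 1)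
    (hm : ∀ i ∈ s, (-1 : ℂ) ∈ B i) (hnt : ∀ i ∈ s, (B i).Nontrivial)
    (hinter : ∀ i ∈ s, ∀ j ∈ s, i ≠ j → B i ∩ B j ⊆ {-1}) : s.card ≤ 2 := by
  classical
  by_contra! hs
  -- Two of the sets leave `-1` on the same side, pigeonholing on `Bool`.
  obtain ⟨i, hi, j, hj, hij, hside⟩ := Finset.exists_ne_map_eq_of_card_lt_of_maps_to
    (t := Finset.univ) (by simpa using hs)
    (f := fun i => decide (∀ᶠ θ : ℝ in 𝓝[<] π, exp (θ * I) ∈ B i))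
    fun _ _ => Finset.mem_coe.2 (Finset.mem_univ _)
  have hside : (∀ᶠ θ : ℝ in 𝓝[<] π, exp (θ * I) ∈ B i) ↔ ∀ᶠ θ : ℝ in 𝓝[<] π, exp (θ * I) ∈ B j := by
    simpa using hside
  have hsides := fun k hk => eventually_exp_mul_I_mem_of_isPreconnected (hB k hk) (hBs k hk)
    (hm k hk) (hnt k hk)
  obtain ⟨z, hz, hz1⟩ : ∃ z ∈ B i ∩ B j, z ≠ -1 := by
    by_cases hlt : ∀ᶠ θ : ℝ in 𝓝[<] π, exp (θ * I) ∈ B i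
    · exact exists_mem_inter_ne_neg_one (Ioo_mem_nhdsLT (neg_lt_self pi_pos)) hlt (hside.1 hlt)
    · exact exists_mem_inter_ne_neg_one (Ioo_mem_nhdsGT (neg_lt_self pi_pos))
        ((hsides i hi).resolve_left hlt) ((hsides j hj).resolve_left (hside.not.1 hlt))
  exact hz1 (hinter i hi j hj hij hz)

end Complex

namespace IsCircle

variable {d : ℕ} {C C' : Set (EuclideanSpace ℝ (Fin d))}

theorem eq_circumcircle (hC : IsCircle d C) (T : Affine.Simplex ℝ (EuclideanSpace ℝ (Fin d)) 2)
    (hT : ∀ i, T.points i ∈ C) :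
    C = {x | x ∈ affineSpan ℝ (range T.points) ∧ dist x T.circumcenter = T.circumradius} := by
  obtain ⟨P, c, ρ, hP, hcP, -, rfl⟩ := hC
  have : FiniteDimensional ℝ P.direction := .of_finrank_eq_succ hP
  have hspan : affineSpan ℝ (range T.points) = P :=
    T.independent.affineSpan_eq_of_le_of_card_eq_finrank_add_one
      ((affineSpan_le).2 (by rintro _ ⟨i, rfl⟩; exact (hT i).1)) (by simp [hP])
  have hc : c = T.circumcenter := T.eq_circumcenter_of_dist_eq (hspan ▸ hcP) fun i => (hT i).2
  have hρ : ρ = T.circumradius := T.eq_circumradius_of_dist_eq (hspan ▸ hcP) fun i => (hT i).2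
  rw [hspan, hc, hρ]

theorem eq_of_mem_of_mem (hC : IsCircle d C) (hC' : IsCircle d C')
    {p q s : EuclideanSpace ℝ (Fin d)} (hp : p ∈ C ∩ C') (hq : q ∈ C ∩ C') (hs : s ∈ C ∩ C')
    (hpq : p ≠ q) (hps : p ≠ s) (hqs : q ≠ s) : C = C' := by
  set x : Fin 3 → EuclideanSpace ℝ (Fin d) := ![p, q, s]
  have hx : ∀ i, x i ∈ C ∩ C' := by
    intro i; fin_cases i <;> assumption
  have hinj : Function.Injective x := by
    intro i j; fin_cases i <;> fin_cases j <;> simp [x, hpq, hps, hqs, hpq.symm, hps.symm, hqs.symm]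
  obtain ⟨P, c, ρ, -, -, -, rfl⟩ := id hC
  have hcosph : EuclideanGeometry.Cospherical (range x) :=
    ⟨c, ρ, by rintro _ ⟨i, rfl⟩; exact (hx i).1.2⟩
  let T : Affine.Simplex ℝ (EuclideanSpace ℝ (Fin d)) 2 :=
    ⟨x, hcosph.affineIndependent subset_rfl hinj⟩
  rw [hC.eq_circumcircle T fun i => (hx i).1, hC'.eq_circumcircle T fun i => (hx i).2]

open Finset in
theorem card_filter_mem_inter_le_two {V : Type*} [Fintype V] [DecidablePred (· ∈ C ∩ C')]
    (hC : IsCircle d C) (hC' : IsCircle d C') (hne : C ≠ C')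
    {f : V → EuclideanSpace ℝ (Fin d)} (hf : Function.Injective f) :
    #{v | f v ∈ C ∩ C'} ≤ 2 := by
  by_contra! h
  obtain ⟨u, hu, v, hv, w, hw, huv, huw, hvw⟩ := two_lt_card.1 h
  rw [mem_filter_univ] at hu hv hw
  exact hne (hC.eq_of_mem_of_mem hC' hu hv hw (hf.ne huv) (hf.ne huw) (hf.ne hvw))

theorem exists_continuous_injOn_sphere (hC : IsCircle d C) {p : EuclideanSpace ℝ (Fin d)}
    (hp : p ∈ C) :
    ∃ g : EuclideanSpace ℝ (Fin d) → ℂ, Continuous g ∧ InjOn g C ∧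
      MapsTo g C (sphere 0 1) ∧ g p = -1 := by
  obtain ⟨P, c, ρ, hP, hcP, hρ, rfl⟩ := hC
  let f : ℂ ≃ₗᵢ[ℝ] P.direction :=
    Complex.isometryOfOrthonormal ((stdOrthonormalBasis ℝ P.direction).reindex (finCongr hP))
  let ψ : EuclideanSpace ℝ (Fin d) → ℂ :=
    fun x => f.symm (P.direction.orthogonalProjectionOnto (x - c))
  have hψ : ∀ x ∈ P, (f (ψ x) : EuclideanSpace ℝ (Fin d)) = x - c := fun x hx => by
    simp only [ψ, LinearIsometryEquiv.apply_symm_apply]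
    exact congrArg Subtype.val (Submodule.orthogonalProjectionOnto_mem_subspace_eq_self
      ⟨x - c, AffineSubspace.vsub_mem_direction hx hcP⟩)
  have hψnorm : ∀ x ∈ {x | x ∈ P ∧ dist x c = ρ}, ‖ψ x‖ = ρ := fun x hx => by
    rw [← f.norm_map, ← Submodule.norm_coe, hψ x hx.1, ← dist_eq_norm, hx.2]
  have hψinj : InjOn ψ {x | x ∈ P ∧ dist x c = ρ} := fun x hx y hy hxy => by
    have := hψ y hy.1
    rw [← hxy, hψ x hx.1] at this
    exact sub_left_injective this
  have hψp : ψ p ≠ 0 := fun h => hρ.ne' (by rw [← hψnorm p hp, h, norm_zero])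
  refine ⟨fun x => -ψ x / ψ p, by fun_prop, ?_, ?_, neg_div_self hψp⟩
  · intro x hx y hy hxy
    exact hψinj hx hy (by simpa [hψp] using hxy)
  · intro x hx
    simp [hψnorm x hx, hψnorm p hp, hρ.ne']

theorem card_le_two_of_inter_subset {ι : Type*} {s : Finset ι} (hC : IsCircle d C)
    {A : ι → Set (EuclideanSpace ℝ (Fin d))} {p : EuclideanSpace ℝ (Fin d)}
    (hAC : ∀ i ∈ s, A i ⊆ C) (hA : ∀ i ∈ s, IsPreconnected (A i))
    (hp : ∀ i ∈ s, p ∈ A i) (hnt : ∀ i ∈ s, (A i).Nontrivial)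
    (hinter : ∀ i ∈ s, ∀ j ∈ s, i ≠ j → A i ∩ A j ⊆ {p}) : s.card ≤ 2 := by
  obtain rfl | ⟨i₀, hi₀⟩ := s.eq_empty_or_nonempty
  · simp
  obtain ⟨g, hg, hinj, hmaps, hgp⟩ := hC.exists_continuous_injOn_sphere (hAC i₀ hi₀ (hp i₀ hi₀))
  refine Complex.card_le_two_of_isPreconnected_of_inter_subset (B := fun i => g '' A i)
    (fun i hi => (hA i hi).image g hg.continuousOn)
    (fun i hi => (hmaps.mono_left (hAC i hi)).image_subset) (fun i hi => ⟨p, hp i hi, hgp⟩)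
    (fun i hi => (hnt i hi).image_of_injOn (hinj.mono (hAC i hi))) fun i hi j hj hij => ?_
  rw [← hinj.image_inter (hAC i hi) (hAC j hj), ← hgp, ← image_singleton]
  exact image_mono (hinter i hi j hj hij)

end IsCircle

open Finset

namespace CircularArcDrawing

variable {d : ℕ} {V : Type*} {G : SimpleGraph V} (D : CircularArcDrawing d G)

theorem arc_inter_arc_subset {e f : Sym2 V} (he : e ∈ G.edgeSet) (hf : f ∈ G.edgeSet)
    (hef : e ≠ f) {v : V} (hve : v ∈ e) (hvf : v ∈ f) : D.arc e ∩ D.arc f ⊆ {D.pos v} := by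
  rw [D.crossFree e he f hf hef]
  rintro _ ⟨w, ⟨hwe, hwf⟩, rfl⟩
  by_contra hwv
  exact hef (Sym2.eq_of_ne_mem (Ne.symm (ne_of_apply_ne D.pos hwv)) hve hwe hvf hwf)

theorem arc_nontrivial {e : Sym2 V} (he : e ∈ G.edgeSet) : (D.arc e).Nontrivial := by
  induction e using Sym2.ind with
  | _ u v =>
    exact ⟨D.pos u, D.endpoint_mem _ he u (Sym2.mem_mk_left u v), D.pos v,
      D.endpoint_mem _ he v (Sym2.mem_mk_right u v), D.inj.ne (G.mem_edgeSet.1 he).ne⟩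

theorem card_le_two_of_arc_subset {C : Set (EuclideanSpace ℝ (Fin d))} (hC : IsCircle d C)
    {s : Finset (Sym2 V)} (hsG : ∀ e ∈ s, e ∈ G.edgeSet) (hsC : ∀ e ∈ s, D.arc e ⊆ C) {v : V}
    (hv : ∀ e ∈ s, v ∈ e) : #s ≤ 2 :=
  hC.card_le_two_of_inter_subset hsC
    (fun e he => (D.arc_isArc e (hsG e he)).choose_spec.2.2.2.isPreconnected)
    (fun e he => D.endpoint_mem e (hsG e he) v (hv e he))
    (fun e he => D.arc_nontrivial (hsG e he))
    fun e he f hf hef => D.arc_inter_arc_subset (hsG e he) (hsG f hf) hef (hv e he) (hv f hf)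

/-- Double counting: both endpoints of an edge on `C` lie on `C`, and each vertex on `C` is an
endpoint of at most two of these edges. -/
theorem card_filter_arc_subset_le [Fintype V] [DecidableEq V] {C : Set (EuclideanSpace ℝ (Fin d))}
    [DecidablePred (· ∈ C)] [DecidablePred (fun e => D.arc e ⊆ C)] (hC : IsCircle d C)
    {s : Finset (Sym2 V)} (hsG : ∀ e ∈ s, e ∈ G.edgeSet) :
    #{e ∈ s | D.arc e ⊆ C} ≤ #{v | D.pos v ∈ C} := by
  have hE : ∀ e ∈ ({e ∈ s | D.arc e ⊆ C} : Finset _), e ∈ G.edgeSet ∧ D.arc e ⊆ C :=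
    fun e he => ⟨hsG e (mem_filter.1 he).1, (mem_filter.1 he).2⟩
  have h := card_mul_le_card_mul (s := {e ∈ s | D.arc e ⊆ C}) (t := {v | D.pos v ∈ C})
    (m := 2) (n := 2) (fun e v => v ∈ e) (fun e he => ?_) fun v _ => ?_
  · exact Nat.le_of_mul_le_mul_right h two_pos
  · obtain ⟨heG, heC⟩ := hE e he
    have hend : ∀ u ∈ e, u ∈ bipartiteAbove (fun e v => v ∈ e) {v | D.pos v ∈ C} e :=
      fun u hu => (mem_bipartiteAbove _).2
        ⟨(mem_filter_univ _).2 (heC (D.endpoint_mem e heG u hu)), hu⟩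
    induction e using Sym2.ind with
    | _ u w =>
      calc 2 = #{u, w} := (card_pair (G.mem_edgeSet.1 heG).ne).symm
        _ ≤ _ := card_le_card <| insert_subset (hend u (Sym2.mem_mk_left u w)) <|
          singleton_subset_iff.2 (hend w (Sym2.mem_mk_right u w))
  · exact D.card_le_two_of_arc_subset hC (fun e he => (hE e (mem_filter.1 he).1).1)
      (fun e he => (hE e (mem_filter.1 he).1).2) fun e he => (mem_filter.1 he).2

open scoped Classical in
theorem ncard_edgeSet_le_sum_card [Fintype V] {𝒞 : Finset (Set (EuclideanSpace ℝ (Fin d)))}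
    (hcirc : ∀ C ∈ 𝒞, IsCircle d C) (hcov : D.CoveredBy 𝒞) :
    G.edgeSet.ncard ≤ ∑ v, #{C ∈ 𝒞 | D.pos v ∈ C} := by
  rw [← G.coe_edgeFinset, Set.ncard_coe_finset]
  calc #G.edgeFinset ≤ #(𝒞.biUnion fun C => {e ∈ G.edgeFinset | D.arc e ⊆ C}) :=
        card_le_card fun e he => by
          obtain ⟨C, hC, heC⟩ := hcov e (G.mem_edgeFinset.1 he)
          exact mem_biUnion.2 ⟨C, hC, mem_filter.2 ⟨he, heC⟩⟩
    _ ≤ ∑ C ∈ 𝒞, #{e ∈ G.edgeFinset | D.arc e ⊆ C} := card_biUnion_le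
    _ ≤ ∑ C ∈ 𝒞, #{v | D.pos v ∈ C} := sum_le_sum fun C hC =>
        D.card_filter_arc_subset_le (hcirc C hC) fun e he => G.mem_edgeFinset.1 he
    _ = ∑ v, #{C ∈ 𝒞 | D.pos v ∈ C} := by
        simp only [card_filter]
        exact sum_comm

end CircularArcDrawing

open scoped Classical in
theorem sum_card_offDiag_filter_mem_le {α V : Type*} [Fintype V] {𝒞 : Finset (Set α)}
    {f : V → α} (h𝒞 : ∀ C ∈ 𝒞, ∀ C' ∈ 𝒞, C ≠ C' → #{v | f v ∈ C ∩ C'} ≤ 2) :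
    ∑ v, #{C ∈ 𝒞 | f v ∈ C}.offDiag ≤ 2 * #𝒞.offDiag := by
  let r : V → Set α × Set α → Prop := fun v q => f v ∈ q.1 ∩ q.2
  calc ∑ v, #{C ∈ 𝒞 | f v ∈ C}.offDiag = ∑ v, #(𝒞.offDiag.bipartiteAbove r v) := by
        congr! 2 with v
        ext ⟨C, C'⟩
        simp only [Finset.mem_offDiag, mem_filter, mem_bipartiteAbove, r, mem_inter_iff]
        tauto
    _ = ∑ q ∈ 𝒞.offDiag, #(univ.bipartiteBelow r q) :=
        sum_card_bipartiteAbove_eq_sum_card_bipartiteBelow r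
    _ ≤ ∑ _q ∈ 𝒞.offDiag, 2 := sum_le_sum fun q hq => by
        obtain ⟨hC, hC', hne⟩ := Finset.mem_offDiag.1 hq
        exact h𝒞 q.1 hC q.2 hC' hne
    _ = 2 * #𝒞.offDiag := by rw [sum_const, smul_eq_mul, mul_comm]

open scoped Classical in
theorem sum_sq_card_filter_mem_le {α V : Type*} [Fintype V] {𝒞 : Finset (Set α)}
    {f : V → α} (h𝒞 : ∀ C ∈ 𝒞, ∀ C' ∈ 𝒞, C ≠ C' → #{v | f v ∈ C ∩ C'} ≤ 2) :
    ∑ v, (#{C ∈ 𝒞 | f v ∈ C} : ℝ) ^ 2 ≤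
      ∑ v, (#{C ∈ 𝒞 | f v ∈ C} : ℝ) + 2 * ((#𝒞 : ℝ) ^ 2 - #𝒞) := by
  have hcast : ∀ k : ℕ, ((k * k - k : ℕ) : ℝ) = (k : ℝ) ^ 2 - k := fun k => by
    rw [Nat.cast_sub (Nat.le_mul_self k)]
    push_cast
    ring
  have h := sum_card_offDiag_filter_mem_le h𝒞
  simp only [offDiag_card] at h
  have h' : ∑ v, ((#{C ∈ 𝒞 | f v ∈ C} : ℝ) ^ 2 - #{C ∈ 𝒞 | f v ∈ C}) ≤
      2 * ((#𝒞 : ℝ) ^ 2 - #𝒞) := by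
    simpa only [Nat.cast_sum, Nat.cast_mul, Nat.cast_ofNat, hcast] using
      (Nat.cast_le (α := ℝ)).2 h
  rw [sum_sub_distrib] at h'
  linarith

theorem half_one_add_sqrt_le {n m I r : ℝ} (hn : 0 < n) (hnm : n ≤ 2 * m) (hmI : m ≤ I)
    (hr : 1 / 2 ≤ r) (hI : I ^ 2 ≤ n * (I + 2 * (r ^ 2 - r))) :
    (1 + √(2 * m ^ 2 / n - 2 * m + 1)) / 2 ≤ r := by
  -- `x ↦ x ^ 2 - n * x` is increasing on `[n / 2, ∞)`, so `I` may be replaced by `m`.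
  have hm : m ^ 2 ≤ n * (m + 2 * (r ^ 2 - r)) := by
    nlinarith [mul_nonneg (sub_nonneg.2 hmI) (by linarith : 0 ≤ I + m - n)]
  have hsq : 2 * m ^ 2 / n - 2 * m + 1 ≤ (2 * r - 1) ^ 2 := by
    have : 2 * m ^ 2 / n ≤ 2 * (m + 2 * (r ^ 2 - r)) := by
      rw [div_le_iff₀ hn]
      linarith
    linarith
  linarith [(Real.sqrt_le_left (by linarith : 0 ≤ 2 * r - 1)).2 hsq]

theorem circle_cover_lower_bound_edges_general {d : ℕ} {V : Type*} [Fintype V]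
    (G : SimpleGraph V) (n m : ℕ)
    (hn : n = Fintype.card V) (hm : m = G.edgeSet.ncard)
    (hn1 : 1 ≤ n) (hnm : n ≤ m)
    (D : CircularArcDrawing d G)
    (𝒞 : Finset (Set (EuclideanSpace ℝ (Fin d))))
    (hcirc : ∀ C ∈ 𝒞, IsCircle d C) (hcov : D.CoveredBy 𝒞)
    (r : ℕ) (hr : 𝒞.card = r) :
    (1 + Real.sqrt (2 * (m : ℝ) ^ 2 / (n : ℝ) - 2 * (m : ℝ) + 1)) / 2 ≤ (r : ℝ) := by
  classical
  set t : V → ℕ := fun v => #{C ∈ 𝒞 | D.pos v ∈ C}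
  have hmt : (m : ℝ) ≤ ∑ v, (t v : ℝ) := by
    exact_mod_cast hm ▸ D.ncard_edgeSet_le_sum_card hcirc hcov
  have hsq : ∑ v, (t v : ℝ) ^ 2 ≤ ∑ v, (t v : ℝ) + 2 * ((r : ℝ) ^ 2 - r) :=
    hr ▸ sum_sq_card_filter_mem_le fun C hC C' hC' hne =>
      (hcirc C hC).card_filter_mem_inter_le_two (hcirc C' hC') hne D.inj
  have hCS : (∑ v, (t v : ℝ)) ^ 2 ≤ n * ∑ v, (t v : ℝ) ^ 2 := by
    simpa [hn] using sq_sum_le_card_mul_sum_sq (s := univ) (f := fun v => (t v : ℝ))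
  have hr1 : 1 ≤ r := by
    obtain ⟨e, he⟩ := Set.nonempty_of_ncard_ne_zero (hm ▸ by omega : G.edgeSet.ncard ≠ 0)
    obtain ⟨C, hC, -⟩ := hcov e he
    exact hr ▸ card_pos.2 ⟨C, hC⟩
  exact half_one_add_sqrt_le (by exact_mod_cast hn1) (by exact_mod_cast (by omega : n ≤ 2 * m))
    hmt (by linarith [(Nat.one_le_cast (α := ℝ)).2 hr1]) (hCS.trans (by gcongr))

/-- If a finite simple graph `G` with `n` vertices and `m` edges, `m ≥ n ≥ 1`, admits a
crossing-free circular-arc drawing in `ℝ^d` (`d ≥ 2`) covered by a family of `r` circles,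
then `r ≥ (1 + √(2m²/n − 2m + 1))/2`. -/
theorem circle_cover_lower_bound_edges {d : ℕ} (hd : 2 ≤ d) {V : Type*} [Fintype V]
    (G : SimpleGraph V) (n m : ℕ)
    (hn : n = Fintype.card V) (hm : m = G.edgeSet.ncard)
    (hn1 : 1 ≤ n) (hnm : n ≤ m)
    (D : CircularArcDrawing d G)
    (𝒞 : Finset (Set (EuclideanSpace ℝ (Fin d))))
    (hcirc : ∀ C ∈ 𝒞, IsCircle d C) (hcov : D.CoveredBy 𝒞)
    (r : ℕ) (hr : 𝒞.card = r) :
    (1 + Real.sqrt (2 * (m : ℝ) ^ 2 / (n : ℝ) - 2 * (m : ℝ) + 1)) / 2 ≤ (r : ℝ) :=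
  circle_cover_lower_bound_edges_general G n m hn hm hn1 hnm D 𝒞 hcirc hcov r hr
end
end

section
/- Let d ≥ 2 and let G be a finite simple graph that admits a crossing-free circular-arc drawing in ℝ^d covered by a family of r circles. Then the bisection width of G satisfies bw(G) ≤ 2r. -/
open Set

noncomputable section

/-- The bisection width of `G`: the minimum, over all sets `W` of `⌈n/2⌉` vertices
(whose complement then has `⌊n/2⌋` vertices), of the number of edges between
`W` and its complement. -/
def bisectionWidth {V : Type*} [Fintype V] (G : SimpleGraph V) : ℕ :=
  sInf {w | ∃ W : Finset V, W.card = (Fintype.card V + 1) / 2 ∧ w = cutWidth G W}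

/-!
Choose a direction `a` in which the vertices have pairwise distinct heights `⟪a, x⟫`, and a
height `t` with exactly `⌈n/2⌉` vertices below it and none on it. By the intermediate value
theorem, the arc of every edge of this bisection meets the hyperplane `⟪a, x⟫ = t` at a point
that is not a vertex, so no other arc passes through it. A circle either lies in the hyperplane,
which is impossible for a circle carrying an arc, or meets it in at most two points, since those
points are collinear and cospherical. Hence every circle of the cover carries at most two edges of
the bisection.
-/

open scoped RealInnerProductSpace

open Function EuclideanGeometry

section Order

variable {V α : Type*} [Fintype V] [LinearOrder α] {g : V → α}

theorem exists_card_eq_forall_lt (hg : Injective g) {k : ℕ} (hk : k ≤ Fintype.card V) :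
    ∃ W : Finset V, W.card = k ∧ ∀ u ∈ W, ∀ v ∉ W, g u < g v := by
  classical
  induction k with
  | zero => exact ⟨∅, by simp⟩
  | succ k ih =>
    obtain ⟨W, hWcard, hW⟩ := ih (by omega)
    have hne : Wᶜ.Nonempty := by
      rw [← Finset.card_pos, Finset.card_compl, hWcard]
      omega
    obtain ⟨v₀, hv₀, hmin⟩ := Wᶜ.exists_min_image g hne
    rw [Finset.mem_compl] at hv₀
    refine ⟨insert v₀ W, by rw [Finset.card_insert_of_notMem hv₀, hWcard], ?_⟩
    intro u hu v hv
    rw [Finset.mem_insert, not_or] at hv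
    rcases Finset.mem_insert.mp hu with rfl | hu
    · exact (hmin v (Finset.mem_compl.mpr hv.2)).lt_of_ne (hg.ne (Ne.symm hv.1))
    · exact hW u hu v hv.2

theorem exists_card_filter_lt_eq [DenselyOrdered α] [NoMaxOrder α] [NoMinOrder α] [Nonempty α]
    (hg : Injective g) {k : ℕ} (hk : k ≤ Fintype.card V) :
    ∃ t : α, (∀ v, g v ≠ t) ∧ (Finset.univ.filter fun v => g v < t).card = k := by
  classical
  obtain ⟨W, hWcard, hW⟩ := exists_card_eq_forall_lt hg hk
  obtain ⟨t, hlt, hgt⟩ := (W.image g).exists_between' (Wᶜ.image g) (by simpa using hW)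
  simp only [Finset.mem_image, Finset.mem_compl, forall_exists_index, and_imp,
    forall_apply_eq_imp_iff₂] at hlt hgt
  have hside : ∀ v, g v < t ↔ v ∈ W := fun v =>
    ⟨fun h => by_contra fun hv => (hgt v hv).not_gt h, hlt v⟩
  refine ⟨t, fun v hv => ?_, ?_⟩
  · by_cases h : v ∈ W
    · exact (hlt v h).ne hv
    · exact (hgt v h).ne' hv
  · simpa [hside] using hWcard

end Order

section InnerProductSpace

variable {E : Type*} [NormedAddCommGroup E] [InnerProductSpace ℝ E]

theorem exists_injective_inner {ι : Type*} [Finite ι] {p : ι → E} (hp : Injective p) :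
    ∃ a : E, Injective fun i => ⟪a, p i⟫ := by
  let q : {x : ι × ι // x.1 ≠ x.2} → Subspace ℝ E := fun x =>
    LinearMap.ker (innerₛₗ ℝ (p x.1.1 - p x.1.2))
  have hq : ∀ x, q x ≠ ⊤ := by
    intro x hx
    have : p x.1.1 - p x.1.2 ∈ q x := hx ▸ Submodule.mem_top
    rw [LinearMap.mem_ker, innerₛₗ_apply_apply, inner_self_eq_zero, sub_eq_zero] at this
    exact x.2 (hp this)
  obtain ⟨a, ha⟩ : ∃ a, a ∉ ⋃ x, (q x : Set E) := by
    by_contra! h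
    obtain ⟨x, hx⟩ := Subspace.exists_eq_top_of_iUnion_eq_univ (Set.eq_univ_of_forall h)
    exact hq x hx
  refine ⟨a, fun i j hij => by_contra fun hne => ha (Set.mem_iUnion.mpr ⟨⟨(i, j), hne⟩, ?_⟩)⟩
  simp only [q, SetLike.mem_coe, LinearMap.mem_ker, innerₛₗ_apply_apply, real_inner_comm a,
    inner_sub_right] at hij ⊢
  exact sub_eq_zero.mpr hij

theorem collinear_inter_setOf_inner_eq [FiniteDimensional ℝ E] {P : AffineSubspace ℝ E}
    (hP : Module.finrank ℝ P.direction ≤ 2) {a : E} (ha : ∃ v ∈ P.direction, ⟪a, v⟫ ≠ 0)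
    (t : ℝ) : Collinear ℝ ((P : Set E) ∩ {x | ⟪a, x⟫ = t}) := by
  obtain ⟨v, hvP, hv⟩ := ha
  set L := P.direction ⊓ LinearMap.ker (innerₛₗ ℝ a)
  have hL : L < P.direction :=
    lt_of_le_of_ne inf_le_left fun h => hv (h ▸ hvP : v ∈ L).2
  have hspan : vectorSpan ℝ ((P : Set E) ∩ {x | ⟪a, x⟫ = t}) ≤ L := by
    rw [vectorSpan_def, Submodule.span_le]
    rintro _ ⟨x, ⟨hxP, hx⟩, y, ⟨hyP, hy⟩, rfl⟩
    refine ⟨P.vsub_mem_direction hxP hyP, ?_⟩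
    change ⟪a, x - y⟫ = 0
    rw [inner_sub_right, hx.out, hy.out, sub_self]
  rw [collinear_iff_finrank_le_one]
  have := Submodule.finrank_mono hspan
  have := Submodule.finrank_lt_finrank_of_lt hL
  omega

end InnerProductSpace

theorem EuclideanGeometry.Cospherical.encard_le_two_of_collinear {V P : Type*}
    [NormedAddCommGroup V] [InnerProductSpace ℝ V] [MetricSpace P] [NormedAddTorsor V P]
    {s : Set P} (hs : Cospherical s) (hc : Collinear ℝ s) : s.encard ≤ 2 := by
  by_contra! h
  obtain ⟨t, hts, ht⟩ := Set.exists_subset_encard_eq (Order.add_one_le_of_lt h)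
  obtain ⟨x, y, z, hxy, hxz, hyz, rfl⟩ := Set.encard_eq_three.mp ht
  exact affineIndependent_iff_not_collinear_set.mp
    ((hs.subset hts).affineIndependent_of_ne hxy hxz hyz) (hc.subset hts)

theorem IsCircle.subset_or_encard_inter_le_two {d : ℕ} {C : Set (EuclideanSpace ℝ (Fin d))}
    (hC : IsCircle d C) (a : EuclideanSpace ℝ (Fin d)) (t : ℝ) :
    C ⊆ {x | ⟪a, x⟫ = t} ∨ (C ∩ {x | ⟪a, x⟫ = t}).encard ≤ 2 := by
  obtain ⟨P, c, ρ, hdim, hcP, -, rfl⟩ := hC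
  by_cases hconst : ∀ v ∈ P.direction, ⟪a, v⟫ = 0
  · have hc : ∀ x ∈ P, ⟪a, x⟫ = ⟪a, c⟫ := fun x hx => by
      simpa [vsub_eq_sub, inner_sub_right, sub_eq_zero] using
        hconst _ (P.vsub_mem_direction hx hcP)
    by_cases hct : ⟪a, c⟫ = t
    · exact Or.inl fun x hx => (hc x hx.1).trans hct
    · refine Or.inr (le_of_eq_of_le ?_ zero_le)
      exact Set.encard_eq_zero.mpr (Set.eq_empty_of_forall_notMem fun x hx =>
        hct ((hc x hx.1.1).symm.trans hx.2))
  · push Not at hconst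
    have hsphere : Cospherical ({x | x ∈ P ∧ dist x c = ρ} ∩ {x | ⟪a, x⟫ = t}) :=
      ⟨c, ρ, fun x hx => hx.1.2⟩
    refine Or.inr (hsphere.encard_le_two_of_collinear ?_)
    exact (collinear_inter_setOf_inner_eq hdim.le hconst t).subset
      (Set.inter_subset_inter_left _ fun x hx => hx.1)

namespace CircularArcDrawing

variable {d : ℕ} {V : Type*} {G : SimpleGraph V} (D : CircularArcDrawing d G)

theorem exists_mem_arc_eq {u v : V} (huv : s(u, v) ∈ G.edgeSet)
    {f : EuclideanSpace ℝ (Fin d) → ℝ} (hf : Continuous f) {t : ℝ}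
    (ht : t ∈ Set.Icc (f (D.pos u)) (f (D.pos v))) : ∃ x ∈ D.arc s(u, v), f x = t := by
  obtain ⟨-, -, -, -, hconn⟩ := D.arc_isArc _ huv
  exact hconn.isPreconnected.intermediate_value (D.endpoint_mem _ huv u (Sym2.mem_mk_left u v))
    (D.endpoint_mem _ huv v (Sym2.mem_mk_right u v)) hf.continuousOn ht

theorem eq_of_mem_arc_of_mem_arc {e f : Sym2 V} (he : e ∈ G.edgeSet) (hf : f ∈ G.edgeSet)
    {x : EuclideanSpace ℝ (Fin d)} (hx : x ∉ Set.range D.pos) (hxe : x ∈ D.arc e)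
    (hxf : x ∈ D.arc f) : e = f := by
  by_contra hef
  have hx' : x ∈ D.arc e ∩ D.arc f := ⟨hxe, hxf⟩
  rw [D.crossFree e he f hf hef] at hx'
  obtain ⟨w, -, rfl⟩ := hx'
  exact hx ⟨w, rfl⟩

theorem encard_setOf_arc_inter_nonempty_le {𝒞 : Finset (Set (EuclideanSpace ℝ (Fin d)))}
    (hcov : D.CoveredBy 𝒞) {H : Set (EuclideanSpace ℝ (Fin d))} (hpos : ∀ v, D.pos v ∉ H)
    (hH : ∀ C ∈ 𝒞, C ⊆ H ∨ (C ∩ H).encard ≤ 2) :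
    {e ∈ G.edgeSet | (D.arc e ∩ H).Nonempty}.encard ≤ 2 * 𝒞.card := by
  set S := {e ∈ G.edgeSet | (D.arc e ∩ H).Nonempty}
  have hfiber : ∀ C ∈ 𝒞, {e ∈ S | D.arc e ⊆ C}.encard ≤ 2 := by
    intro C hC
    rcases hH C hC with hCH | hCH
    · refine le_of_eq_of_le (Set.encard_eq_zero.mpr (Set.eq_empty_of_forall_notMem ?_)) zero_le
      rintro e ⟨⟨he, -⟩, heC⟩
      exact hpos _ (hCH (heC (D.endpoint_mem e he _ (Sym2.out_fst_mem e))))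
    · let p e := Classical.epsilon (· ∈ D.arc e ∩ H)
      have hp : ∀ e ∈ S, p e ∈ D.arc e ∩ H := fun e he => Classical.epsilon_spec he.2
      refine le_trans (Set.encard_le_encard_of_injOn (f := p) ?_ ?_) hCH
      · rintro e ⟨he, heC⟩
        exact ⟨heC (hp e he).1, (hp e he).2⟩
      · rintro e ⟨he, -⟩ f ⟨hf, -⟩ hpef
        refine D.eq_of_mem_arc_of_mem_arc he.1 hf.1 ?_ (hp e he).1 (hpef ▸ (hp f hf).1)
        rintro ⟨v, hv⟩
        exact hpos v (hv ▸ (hp e he).2)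
  calc S.encard ≤ (⋃ C ∈ 𝒞, {e ∈ S | D.arc e ⊆ C}).encard := by
        refine Set.encard_le_encard fun e he => ?_
        obtain ⟨C, hC, heC⟩ := hcov e he.1
        exact Set.mem_biUnion hC ⟨he, heC⟩
    _ ≤ ∑ C ∈ 𝒞, {e ∈ S | D.arc e ⊆ C}.encard := 𝒞.set_encard_biUnion_le _
    _ ≤ ∑ _C ∈ 𝒞, 2 := Finset.sum_le_sum hfiber
    _ = 2 * 𝒞.card := by rw [Finset.sum_const, nsmul_eq_mul, mul_comm]

end CircularArcDrawing

theorem bisectionWidth_le_two_mul_circle_cover_general {d : ℕ} {V : Type*} [Fintype V]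
    (G : SimpleGraph V) (D : CircularArcDrawing d G)
    (𝒞 : Finset (Set (EuclideanSpace ℝ (Fin d))))
    (hcirc : ∀ C ∈ 𝒞, IsCircle d C) (hcov : D.CoveredBy 𝒞)
    (r : ℕ) (hr : 𝒞.card = r) :
    bisectionWidth G ≤ 2 * r := by
  obtain ⟨a, ha⟩ := exists_injective_inner D.inj
  obtain ⟨t, hpos, hcard⟩ :=
    exists_card_filter_lt_eq ha (k := (Fintype.card V + 1) / 2) (by omega)
  set W := Finset.univ.filter fun v => ⟪a, D.pos v⟫ < t
  set H := {x | ⟪a, x⟫ = t}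
  have hcut : {e ∈ G.edgeSet | ∃ u ∈ W, ∃ v, v ∉ W ∧ e = s(u, v)} ⊆
      {e ∈ G.edgeSet | (D.arc e ∩ H).Nonempty} := by
    rintro _ ⟨he, u, hu, v, hv, rfl⟩
    simp only [W, Finset.mem_filter, Finset.mem_univ, true_and, not_lt] at hu hv
    exact ⟨he, D.exists_mem_arc_eq he (continuous_const.inner continuous_id) ⟨hu.le, hv⟩⟩
  have hmeet := D.encard_setOf_arc_inter_nonempty_le hcov (H := H) hpos
    fun C hC => (hcirc C hC).subset_or_encard_inter_le_two a t
  calc bisectionWidth G ≤ cutWidth G W := Nat.sInf_le ⟨W, hcard, rfl⟩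
    _ ≤ {e ∈ G.edgeSet | (D.arc e ∩ H).Nonempty}.ncard := Set.ncard_le_ncard hcut (Set.toFinite _)
    _ ≤ 2 * r := by
      rw [← hr]
      exact (Set.encard_le_coe_iff_finite_ncard_le.mp (by exact_mod_cast hmeet)).2

/-- If a finite simple graph `G` admits a crossing-free circular-arc drawing in `ℝ^d`
(`d ≥ 2`) covered by a family of `r` circles, then `bw(G) ≤ 2r`. -/
theorem bisectionWidth_le_two_mul_circle_cover {d : ℕ} (hd : 2 ≤ d) {V : Type*} [Fintype V]
    (G : SimpleGraph V) (D : CircularArcDrawing d G)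
    (𝒞 : Finset (Set (EuclideanSpace ℝ (Fin d))))
    (hcirc : ∀ C ∈ 𝒞, IsCircle d C) (hcov : D.CoveredBy 𝒞)
    (r : ℕ) (hr : 𝒞.card = r) :
    bisectionWidth G ≤ 2 * r :=
  bisectionWidth_le_two_mul_circle_cover_general G D 𝒞 hcirc hcov r hr
end
end

section
/- For all positive integers p and q, the complete bipartite graph K_{p,q} admits a crossing-free circular-arc drawing in ℝ³ covered by a family of at most ⌈p/2⌉·⌈q/2⌉ circles. -/
open Set

noncomputable section

/-!
The left vertices lie on the unit circle `γ` of the plane `z = 0`, the right vertices on the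
circle `γ'` of radius `1` about `(1, 0, 0)` in the plane `y = 0`; the two circles are linked.
A sphere about `(1, u, 0)` through `γ'` and a sphere about `(0, 0, s)` through `γ` meet in a
circle `bicircle u s`, which crosses `γ` once on each side of the plane `y = 0` and `γ'` once on
each side of `z = 0`. Put two left and two right vertices on each such circle: the four arcs into
which the planes `y = 0` and `z = 0` cut it form a `K_{2,2}`, so `⌈p/2⌉⌈q/2⌉` circles carry
all edges. Two spheres of the same family meet only inside `y = 0` (resp. `z = 0`), where the
arcs only contain right (resp. left) vertices, so arcs of distinct edges meet only at common
endpoints. Each arc is connected because it is the radial projection, from the point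
`(1/2, 0, 0)` inside the spheres, of a segment onto a sphere.
-/

open RealInnerProductSpace

section SphereExit

variable {E : Type*} [NormedAddCommGroup E] [InnerProductSpace ℝ E]

/-- The parameter `μ > 0` at which the ray `o + μ • d` meets the sphere of radius `R` about `c`:
the positive root of `‖d‖² μ² + 2 ⟪o - c, d⟫ μ + ‖o - c‖² - R² = 0`. -/
def sphereExitParam (c o d : E) (R : ℝ) : ℝ :=
  (-⟪o - c, d⟫ + √(⟪o - c, d⟫ ^ 2 + ‖d‖ ^ 2 * (R ^ 2 - ‖o - c‖ ^ 2))) / ‖d‖ ^ 2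

variable {c o d : E} {R : ℝ}

lemma abs_inner_lt_sqrt_discrim (hd : d ≠ 0) (ho : dist o c < R) :
    |⟪o - c, d⟫| < √(⟪o - c, d⟫ ^ 2 + ‖d‖ ^ 2 * (R ^ 2 - ‖o - c‖ ^ 2)) := by
  have hk : 0 < R ^ 2 - ‖o - c‖ ^ 2 := by
    rw [← dist_eq_norm]; nlinarith [dist_nonneg (x := o) (y := c)]
  rw [← Real.sqrt_sq_eq_abs]
  exact Real.sqrt_lt_sqrt (sq_nonneg _) (by simp [hd, hk])

lemma sphereExitParam_pos (hd : d ≠ 0) (ho : dist o c < R) : 0 < sphereExitParam c o d R :=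
  div_pos (by linarith [le_abs_self ⟪o - c, d⟫, abs_inner_lt_sqrt_discrim hd ho]) (by positivity)

lemma dist_add_smul_eq_iff (hd : d ≠ 0) (ho : dist o c < R) {μ : ℝ} (hμ : 0 < μ) :
    dist (o + μ • d) c = R ↔ μ = sphereExitParam c o d R := by
  have hR : 0 < R := dist_nonneg.trans_lt ho
  have hd2 : 0 < ‖d‖ ^ 2 := by positivity
  have hb := abs_inner_lt_sqrt_discrim hd ho
  have hexp : dist (o + μ • d) c ^ 2 = ‖o - c‖ ^ 2 + 2 * μ * ⟪o - c, d⟫ + μ ^ 2 * ‖d‖ ^ 2 := by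
    rw [dist_eq_norm, add_sub_right_comm, norm_add_sq_real, real_inner_smul_right, norm_smul,
      Real.norm_eq_abs, abs_of_pos hμ]
    ring
  rw [sphereExitParam, eq_div_iff hd2.ne', ← sq_eq_sq₀ dist_nonneg hR.le, hexp]
  set b := ⟪o - c, d⟫
  set D := b ^ 2 + ‖d‖ ^ 2 * (R ^ 2 - ‖o - c‖ ^ 2)
  have hD : √D ^ 2 = D := Real.sq_sqrt (Real.sqrt_pos.1 ((abs_nonneg b).trans_lt hb)).le
  have hexpand : ‖d‖ ^ 2 * (‖o - c‖ ^ 2 + 2 * μ * b + μ ^ 2 * ‖d‖ ^ 2 - R ^ 2)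
      = (μ * ‖d‖ ^ 2 + b) ^ 2 - √D ^ 2 := by rw [hD]; ring
  constructor
  · intro h
    rw [h, sub_self, mul_zero, eq_comm, sub_eq_zero] at hexpand
    rcases sq_eq_sq_iff_eq_or_eq_neg.1 hexpand with h' | h'
    · linarith
    · nlinarith [neg_abs_le b]
  · intro h
    rw [show μ * ‖d‖ ^ 2 + b = √D by linarith, sub_self, mul_eq_zero] at hexpand
    linarith [hexpand.resolve_left hd2.ne']

lemma continuousOn_sphereExitParam : ContinuousOn (fun d => sphereExitParam c o d R) {0}ᶜ := by
  unfold sphereExitParam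
  fun_prop (disch := intro h; simp_all)

variable {d₁ d₂ : E}

lemma isCompact_segment (x y : E) : IsCompact (segment ℝ x y) := by
  rw [segment_eq_image_lineMap]
  exact isCompact_Icc.image AffineMap.lineMap_continuous

lemma sphere_inter_cone_eq_image (ho : dist o c < R) (h0 : (0 : E) ∉ segment ℝ d₁ d₂) :
    {x | dist x c = R ∧ ∃ μ : ℝ, 0 < μ ∧ ∃ d ∈ segment ℝ d₁ d₂, x = o + μ • d}
      = (fun d => o + sphereExitParam c o d R • d) '' segment ℝ d₁ d₂ := by
  ext x
  constructor
  · rintro ⟨hx, μ, hμ, d, hd, rfl⟩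
    have hd0 : d ≠ 0 := ne_of_mem_of_not_mem hd h0
    exact ⟨d, hd, by simp only [← (dist_add_smul_eq_iff hd0 ho hμ).1 hx]⟩
  · rintro ⟨d, hd, rfl⟩
    have hd0 : d ≠ 0 := ne_of_mem_of_not_mem hd h0
    exact ⟨(dist_add_smul_eq_iff hd0 ho (sphereExitParam_pos hd0 ho)).2 rfl,
      _, sphereExitParam_pos hd0 ho, d, hd, rfl⟩

lemma isCompact_isConnected_sphere_inter_cone (ho : dist o c < R)
    (h0 : (0 : E) ∉ segment ℝ d₁ d₂) :
    IsCompact {x | dist x c = R ∧ ∃ μ : ℝ, 0 < μ ∧ ∃ d ∈ segment ℝ d₁ d₂, x = o + μ • d} ∧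
    IsConnected {x | dist x c = R ∧ ∃ μ : ℝ, 0 < μ ∧ ∃ d ∈ segment ℝ d₁ d₂, x = o + μ • d} := by
  have hcont : ContinuousOn (fun d => o + sphereExitParam c o d R • d) (segment ℝ d₁ d₂) :=
    (continuousOn_const.add (continuousOn_sphereExitParam.smul continuousOn_id)).mono
      fun d hd hd0 => h0 (hd0 ▸ hd)
  rw [sphere_inter_cone_eq_image ho h0]
  exact ⟨(isCompact_segment d₁ d₂).image_of_continuousOn hcont,
    ((convex_segment d₁ d₂).isConnected ⟨d₁, left_mem_segment ℝ d₁ d₂⟩).image _ hcont⟩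

end SphereExit

lemma isSphereDim_inter_sphere {d l : ℕ} {P : AffineSubspace ℝ (EuclideanSpace ℝ (Fin d))}
    (hP : Module.finrank ℝ P.direction = l + 1) {o x₀ x₁ : EuclideanSpace ℝ (Fin d)} {R : ℝ}
    (h₀ : x₀ ∈ P) (h₁ : x₁ ∈ P) (hR₀ : dist x₀ o = R) (hR₁ : dist x₁ o = R) (hne : x₀ ≠ x₁) :
    IsSphereDim d l {x | x ∈ P ∧ dist x o = R} := by
  have : Nonempty P := ⟨⟨x₀, h₀⟩⟩
  set c : EuclideanSpace ℝ (Fin d) := ↑(EuclideanGeometry.orthogonalProjection P o)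
  have pythagoras : ∀ x ∈ P, dist x o ^ 2 = dist x c ^ 2 + dist o c ^ 2 := fun x hx => by
    simpa only [sq] using
      EuclideanGeometry.dist_sq_eq_dist_orthogonalProjection_sq_add_dist_orthogonalProjection_sq
        o hx
  have hmem : ∀ x ∈ P, dist x o = R ↔ dist x c = dist x₀ c := fun x hx => by
    rw [← hR₀, ← sq_eq_sq₀ dist_nonneg dist_nonneg, ← sq_eq_sq₀ dist_nonneg dist_nonneg,
      pythagoras x hx, pythagoras x₀ h₀, add_left_inj]
  have hr : 0 < dist x₀ c := by
    by_contra! h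
    have h₀c : x₀ = c := dist_le_zero.1 h
    have h₁c : x₁ = c := dist_le_zero.1 (((hmem x₁ h₁).1 hR₁).trans_le h)
    exact hne (h₀c.trans h₁c.symm)
  refine ⟨P, c, dist x₀ c, hP, EuclideanGeometry.orthogonalProjection_mem o, hr, ?_⟩
  ext x
  exact and_congr_right (hmem x)

local notation "ℝ³" => EuclideanSpace ℝ (Fin 3)

lemma dist_sq_eq_three (x y : ℝ³) :
    dist x y ^ 2 = (x 0 - y 0) ^ 2 + (x 1 - y 1) ^ 2 + (x 2 - y 2) ^ 2 := by
  simp [EuclideanSpace.dist_sq_eq, Fin.sum_univ_three, Real.dist_eq, sq_abs]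

lemma ext_three {x y : ℝ³} (h₀ : x 0 = y 0) (h₁ : x 1 = y 1) (h₂ : x 2 = y 2) : x = y := by
  ext i
  fin_cases i <;> assumption

/-- The intersection of the sphere about `(1, u, 0)` through the circle `y = 0, (x - 1)² + z² = 1`
with the sphere about `(0, 0, s)` through the unit circle of the plane `z = 0`. -/
def bicircle (u s : ℝ) : Set ℝ³ :=
  {x | x 0 ^ 2 + x 1 ^ 2 + x 2 ^ 2 = 2 * x 0 + 2 * u * x 1 ∧
    x 0 ^ 2 + x 1 ^ 2 + x 2 ^ 2 = 1 + 2 * s * x 2}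

lemma mem_bicircle_iff {u s : ℝ} {x : ℝ³} :
    x ∈ bicircle u s ↔ x 0 + u * x 1 - s * x 2 = 1 / 2 ∧ dist x !₂[0, 0, s] = √(1 + s ^ 2) := by
  rw [eq_comm (a := dist x _), Real.sqrt_eq_iff_eq_sq (by positivity) dist_nonneg,
    dist_sq_eq_three]
  simp only [bicircle, Set.mem_ofPred_eq, Matrix.cons_val_zero, Matrix.cons_val_one,
    Matrix.cons_val_two, Matrix.head_cons, Matrix.tail_cons]
  constructor
  · rintro ⟨h₁, h₂⟩
    constructor <;> linarith
  · rintro ⟨h₁, h₂⟩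
    constructor <;> linarith

def bicirclePlane (u s : ℝ) : AffineSubspace ℝ ℝ³ :=
  AffineSubspace.mk' !₂[1 / 2, 0, 0] (ℝ ∙ !₂[1, u, -s])ᗮ

lemma mem_bicirclePlane {u s : ℝ} {x : ℝ³} :
    x ∈ bicirclePlane u s ↔ x 0 + u * x 1 - s * x 2 = 1 / 2 := by
  rw [bicirclePlane, AffineSubspace.mem_mk', Submodule.mem_orthogonal_singleton_iff_inner_right]
  simp [PiLp.inner_apply, Fin.sum_univ_three]
  constructor <;> intro h <;> linarith

lemma finrank_direction_bicirclePlane (u s : ℝ) :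
    Module.finrank ℝ (bicirclePlane u s).direction = 2 := by
  have : Fact (Module.finrank ℝ ℝ³ = 2 + 1) := ⟨finrank_euclideanSpace_fin⟩
  rw [bicirclePlane, AffineSubspace.direction_mk']
  exact Submodule.finrank_orthogonal_span_singleton (by simp)

lemma isCircle_bicircle {u s : ℝ} {v w : ℝ³} (hv : v ∈ bicircle u s) (hw : w ∈ bicircle u s)
    (hne : v ≠ w) : IsCircle 3 (bicircle u s) := by
  simp only [mem_bicircle_iff, ← mem_bicirclePlane] at hv hw
  have : bicircle u s = {x | x ∈ bicirclePlane u s ∧ dist x !₂[0, 0, s] = √(1 + s ^ 2)} := by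
    ext x
    rw [mem_bicircle_iff, ← mem_bicirclePlane]
    rfl
  rw [this]
  exact isSphereDim_inter_sphere (finrank_direction_bicirclePlane u s) hv.1 hw.1 hv.2 hw.2 hne

def quadrant (σ τ u s : ℝ) : Set ℝ³ := {x | x ∈ bicircle u s ∧ 0 ≤ σ * x 1 ∧ 0 ≤ τ * x 2}

section Quadrant

variable {σ τ u s : ℝ} {v w : ℝ³}

/-- `(1/2, 0, 0)` lies in the plane of every `bicircle` and inside its spheres. -/
lemma quadrant_eq_sphere_inter_cone (hv : v ∈ bicircle u s) (hv₂ : v 2 = 0) (hv₁ : 0 < σ * v 1)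
    (hw : w ∈ bicircle u s) (hw₁ : w 1 = 0) (hw₂ : 0 < τ * w 2) :
    quadrant σ τ u s = {x | dist x !₂[0, 0, s] = √(1 + s ^ 2) ∧ ∃ μ : ℝ, 0 < μ ∧
      ∃ d ∈ segment ℝ (v - !₂[1 / 2, 0, 0]) (w - !₂[1 / 2, 0, 0]),
        x = !₂[1 / 2, 0, 0] + μ • d} := by
  simp only [mem_bicircle_iff, hv₂, hw₁, mul_zero, sub_zero, add_zero] at hv hw
  ext x
  simp only [quadrant, Set.mem_ofPred_eq, mem_bicircle_iff]
  constructor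
  · rintro ⟨⟨hxP, hxS⟩, hσx, hτx⟩
    refine ⟨hxS, ?_⟩
    have hα : 0 ≤ x 1 / v 1 := by
      simpa only [mul_div_mul_left _ _ (left_ne_zero_of_mul hv₁.ne')] using div_nonneg hσx hv₁.le
    have hβ : 0 ≤ x 2 / w 2 := by
      simpa only [mul_div_mul_left _ _ (left_ne_zero_of_mul hw₂.ne')] using div_nonneg hτx hw₂.le
    have hxα := (div_mul_cancel₀ (x 1) (right_ne_zero_of_mul hv₁.ne')).symm
    have hxβ := (div_mul_cancel₀ (x 2) (right_ne_zero_of_mul hw₂.ne')).symm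
    set α := x 1 / v 1
    set β := x 2 / w 2
    have hμ : 0 < α + β := by
      by_contra! h
      have hx₁ : x 1 = 0 := by rw [hxα, show α = 0 by linarith, zero_mul]
      have hx₂ : x 2 = 0 := by rw [hxβ, show β = 0 by linarith, zero_mul]
      have := congrArg (· ^ 2) hxS
      simp only [Real.sq_sqrt (by positivity : (0 : ℝ) ≤ 1 + s ^ 2), dist_sq_eq_three] at this
      simp [hx₁, hx₂] at this hxP
      norm_num [hxP] at this
    refine ⟨α + β, hμ,
      (α / (α + β)) • (v - !₂[1 / 2, 0, 0]) + (β / (α + β)) • (w - !₂[1 / 2, 0, 0]),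
      ⟨_, _, by positivity, by positivity, by field_simp, rfl⟩, ?_⟩
    apply ext_three <;> simp [hv₂, hw₁] <;> field_simp
    · linear_combination 2 * hxP - 2 * α * hv.1 - 2 * β * hw.1 - 2 * u * hxα + 2 * s * hxβ
    · exact hxα
    · exact hxβ
  · rintro ⟨hxS, μ, hμ, d, ⟨a, b, ha, hb, hab, rfl⟩, rfl⟩
    refine ⟨⟨?_, hxS⟩, ?_, ?_⟩ <;> simp [hv₂, hw₁]
    · linear_combination μ * a * hv.1 + μ * b * hw.1
    · nlinarith [mul_nonneg hμ.le ha]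
    · nlinarith [mul_nonneg hμ.le hb]

lemma isArc_quadrant (hv : v ∈ bicircle u s) (hv₂ : v 2 = 0) (hv₁ : 0 < σ * v 1)
    (hw : w ∈ bicircle u s) (hw₁ : w 1 = 0) (hw₂ : 0 < τ * w 2) : IsArc 3 (quadrant σ τ u s) := by
  have hO : dist !₂[1 / 2, 0, 0] !₂[0, 0, s] < √(1 + s ^ 2) := by
    rw [Real.lt_sqrt dist_nonneg, dist_sq_eq_three]
    simp
    norm_num
  have h0 : (0 : ℝ³) ∉ segment ℝ (v - !₂[1 / 2, 0, 0]) (w - !₂[1 / 2, 0, 0]) := by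
    rintro ⟨a, b, ha, hb, hab, h⟩
    have h₁ := congrArg (· 1) h
    have h₂ := congrArg (· 2) h
    simp [hv₂, hw₁, right_ne_zero_of_mul hv₁.ne', right_ne_zero_of_mul hw₂.ne'] at h₁ h₂
    linarith
  have hne : v ≠ w := fun h => by
    rw [← h, hv₂, mul_zero] at hw₂
    exact lt_irrefl _ hw₂
  obtain ⟨hcompact, hconnected⟩ := isCompact_isConnected_sphere_inter_cone hO h0
  rw [← quadrant_eq_sphere_inter_cone hv hv₂ hv₁ hw hw₁ hw₂] at hcompact hconnected
  exact ⟨bicircle u s, isCircle_bicircle hv hw hne, fun x hx => hx.1, hcompact, hconnected⟩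

end Quadrant

lemma eq_of_quadratic_eq_zero_of_mul_nonneg {a b c x y : ℝ} (ha : 0 < a) (hc : c < 0)
    (hx : a * x ^ 2 + b * x + c = 0) (hy : a * y ^ 2 + b * y + c = 0) (hxy : 0 ≤ x * y) :
    x = y := by
  by_contra hne
  have hsum : a * (x + y) + b = 0 :=
    (mul_eq_zero.1 (by linear_combination hx - hy : (x - y) * (a * (x + y) + b) = 0)).resolve_left
      (sub_ne_zero.2 hne)
  have hprod : a * (x * y) = c := by linear_combination x * hsum - hx
  linarith [mul_nonneg ha.le hxy]

section Bicircle

variable {u s u' s' : ℝ} {x y : ℝ³}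

lemma one_eq_zero_of_mem_bicircle (hx : x ∈ bicircle u s) (hx' : x ∈ bicircle u' s')
    (hu : u ≠ u') : x 1 = 0 :=
  (mul_eq_zero.1 (by linear_combination (hx'.1 - hx.1) / 2 : (u - u') * x 1 = 0)).resolve_left
    (sub_ne_zero.2 hu)

lemma two_eq_zero_of_mem_bicircle (hx : x ∈ bicircle u s) (hx' : x ∈ bicircle u' s')
    (hs : s ≠ s') : x 2 = 0 :=
  (mul_eq_zero.1 (by linear_combination (hx'.2 - hx.2) / 2 : (s - s') * x 2 = 0)).resolve_left
    (sub_ne_zero.2 hs)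

lemma ne_zero_or_ne_zero_of_mem_bicircle (hx : x ∈ bicircle u s) : x 1 ≠ 0 ∨ x 2 ≠ 0 := by
  by_contra! h
  obtain ⟨h₁, h₂⟩ := hx
  rw [h.1, h.2] at h₁ h₂
  nlinarith

lemma eq_of_mem_bicircle_of_two_eq_zero (hx : x ∈ bicircle u s) (hy : y ∈ bicircle u s)
    (hx₂ : x 2 = 0) (hy₂ : y 2 = 0) (hxy : 0 ≤ x 1 * y 1) : x = y := by
  obtain ⟨hx₁, hx₂'⟩ := hx
  obtain ⟨hy₁, hy₂'⟩ := hy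
  rw [hx₂] at hx₁ hx₂'
  rw [hy₂] at hy₁ hy₂'
  have hx₀ : x 0 = 1 / 2 - u * x 1 := by linarith
  have hy₀ : y 0 = 1 / 2 - u * y 1 := by linarith
  have h₁ : x 1 = y 1 := eq_of_quadratic_eq_zero_of_mul_nonneg (a := 1 + u ^ 2) (b := -u)
    (c := -3 / 4) (by positivity) (by norm_num) (by rw [hx₀] at hx₂'; linarith)
    (by rw [hy₀] at hy₂'; linarith) hxy
  exact ext_three (by rw [hx₀, hy₀, h₁]) h₁ (hx₂.trans hy₂.symm)

lemma eq_of_mem_bicircle_of_one_eq_zero (hx : x ∈ bicircle u s) (hy : y ∈ bicircle u s)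
    (hx₁ : x 1 = 0) (hy₁ : y 1 = 0) (hxy : 0 ≤ x 2 * y 2) : x = y := by
  obtain ⟨hx₁', hx₂⟩ := hx
  obtain ⟨hy₁', hy₂⟩ := hy
  rw [hx₁] at hx₁' hx₂
  rw [hy₁] at hy₁' hy₂
  have hx₀ : x 0 = 1 / 2 + s * x 2 := by linarith
  have hy₀ : y 0 = 1 / 2 + s * y 2 := by linarith
  have h₂ : x 2 = y 2 := eq_of_quadratic_eq_zero_of_mul_nonneg (a := 1 + s ^ 2) (b := -s)
    (c := -3 / 4) (by positivity) (by norm_num) (by rw [hx₀] at hx₂; linarith)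
    (by rw [hy₀] at hy₂; linarith) hxy
  exact ext_three (by rw [hx₀, hy₀, h₂]) (hx₁.trans hy₁.symm) h₂

end Bicircle

def leftCirclePoint (t : ℝ) : ℝ³ := !₂[(1 - t ^ 2) / (1 + t ^ 2), 2 * t / (1 + t ^ 2), 0]

def rightCirclePoint (t : ℝ) : ℝ³ := !₂[2 / (1 + t ^ 2), 0, 2 * t / (1 + t ^ 2)]

lemma leftCirclePoint_mem_bicircle {t u s : ℝ} (ht : 3 * t ^ 2 - 4 * u * t - 1 = 0) :
    leftCirclePoint t ∈ bicircle u s := by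
  have : 1 + t ^ 2 ≠ 0 := by positivity
  simp only [bicircle, leftCirclePoint, Set.mem_ofPred_eq, Matrix.cons_val_zero,
    Matrix.cons_val_one, Matrix.cons_val_two, Matrix.head_cons, Matrix.tail_cons]
  constructor <;> field_simp
  · linear_combination (1 + t ^ 2) * ht
  · ring

lemma rightCirclePoint_mem_bicircle {t u s : ℝ} (ht : t ^ 2 + 4 * s * t - 3 = 0) :
    rightCirclePoint t ∈ bicircle u s := by
  have : 1 + t ^ 2 ≠ 0 := by positivity
  simp only [bicircle, rightCirclePoint, Set.mem_ofPred_eq, Matrix.cons_val_zero,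
    Matrix.cons_val_one, Matrix.cons_val_two, Matrix.head_cons, Matrix.tail_cons]
  constructor <;> field_simp
  · ring
  · linear_combination (-(1 + t ^ 2)) * ht

/- Vertices `2i` and `2i + 1` of either side share the circles of index `i`. With `m = i + 1`,
their parameters are the roots `m`, `-1/(3m)` of `3t² - 4 (bicircleU i) t - 1` on the left and
`m`, `-3/m` of `t² + 4 (bicircleS i) t - 3` on the right; the parity picks the sign of the root. -/

def bicircleU (i : ℕ) : ℝ := (3 * ((i : ℝ) + 1) ^ 2 - 1) / (4 * ((i : ℝ) + 1))

def bicircleS (j : ℕ) : ℝ := (3 - ((j : ℝ) + 1) ^ 2) / (4 * ((j : ℝ) + 1))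

def leftParam (a : ℕ) : ℝ := if Even a then (a / 2 : ℕ) + 1 else -1 / (3 * ((a / 2 : ℕ) + 1))

def rightParam (b : ℕ) : ℝ := if Even b then (b / 2 : ℕ) + 1 else -3 / ((b / 2 : ℕ) + 1)

lemma leftParam_root (a : ℕ) :
    3 * leftParam a ^ 2 - 4 * bicircleU (a / 2) * leftParam a - 1 = 0 := by
  have : ((a / 2 : ℕ) : ℝ) + 1 ≠ 0 := by positivity
  unfold leftParam bicircleU
  split_ifs <;> field_simp <;> ring

lemma rightParam_root (b : ℕ) :
    rightParam b ^ 2 + 4 * bicircleS (b / 2) * rightParam b - 3 = 0 := by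
  have : ((b / 2 : ℕ) : ℝ) + 1 ≠ 0 := by positivity
  unfold rightParam bicircleS
  split_ifs <;> field_simp <;> ring

lemma neg_one_pow_mul_leftParam_pos (a : ℕ) : 0 < (-1) ^ a * leftParam a := by
  unfold leftParam
  split_ifs with h
  · rw [h.neg_one_pow]; positivity
  · rw [(Nat.not_even_iff_odd.1 h).neg_one_pow, neg_one_mul, neg_div, neg_neg]; positivity

lemma neg_one_pow_mul_rightParam_pos (b : ℕ) : 0 < (-1) ^ b * rightParam b := by
  unfold rightParam
  split_ifs with h
  · rw [h.neg_one_pow]; positivity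
  · rw [(Nat.not_even_iff_odd.1 h).neg_one_pow, neg_one_mul, neg_div, neg_neg]; positivity

lemma bicircleU_injective : Function.Injective bicircleU := by
  intro i i' h
  have hi : (i : ℝ) + 1 ≠ 0 := by positivity
  have hi' : (i' : ℝ) + 1 ≠ 0 := by positivity
  unfold bicircleU at h
  field_simp at h
  have : ((i : ℝ) - i') * (3 * ((i : ℝ) + 1) * ((i' : ℝ) + 1) + 1) = 0 := by linear_combination h
  exact_mod_cast sub_eq_zero.1 ((mul_eq_zero.1 this).resolve_right (by positivity))

lemma bicircleS_injective : Function.Injective bicircleS := by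
  intro j j' h
  have hj : (j : ℝ) + 1 ≠ 0 := by positivity
  have hj' : (j' : ℝ) + 1 ≠ 0 := by positivity
  unfold bicircleS at h
  field_simp at h
  have : ((j : ℝ) - j') * (3 + ((j : ℝ) + 1) * ((j' : ℝ) + 1)) = 0 := by linear_combination -h
  exact_mod_cast sub_eq_zero.1 ((mul_eq_zero.1 this).resolve_right (by positivity))

def leftVertex (a : ℕ) : ℝ³ := leftCirclePoint (leftParam a)

def rightVertex (b : ℕ) : ℝ³ := rightCirclePoint (rightParam b)

def edgeArc (a b : ℕ) : Set ℝ³ :=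
  quadrant ((-1) ^ a) ((-1) ^ b) (bicircleU (a / 2)) (bicircleS (b / 2))

section Vertices

variable {a a' b b' : ℕ} {x : ℝ³}

lemma leftVertex_mem_bicircle (a : ℕ) (s : ℝ) : leftVertex a ∈ bicircle (bicircleU (a / 2)) s :=
  leftCirclePoint_mem_bicircle (leftParam_root a)

lemma rightVertex_mem_bicircle (b : ℕ) (u : ℝ) :
    rightVertex b ∈ bicircle u (bicircleS (b / 2)) :=
  rightCirclePoint_mem_bicircle (rightParam_root b)

lemma leftVertex_two (a : ℕ) : leftVertex a 2 = 0 := rfl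

lemma rightVertex_one (b : ℕ) : rightVertex b 1 = 0 := rfl

lemma neg_one_pow_mul_leftVertex_one_pos (a : ℕ) : 0 < (-1) ^ a * leftVertex a 1 := by
  have h : (-1) ^ a * leftVertex a 1 = 2 * ((-1) ^ a * leftParam a) / (1 + leftParam a ^ 2) := by
    simp only [leftVertex, leftCirclePoint, PiLp.toLp_apply, Matrix.cons_val_one,
      Matrix.cons_val_zero]
    ring
  rw [h]
  exact div_pos (by linarith [neg_one_pow_mul_leftParam_pos a]) (by positivity)

lemma neg_one_pow_mul_rightVertex_two_pos (b : ℕ) : 0 < (-1) ^ b * rightVertex b 2 := by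
  have h : (-1) ^ b * rightVertex b 2 = 2 * ((-1) ^ b * rightParam b) / (1 + rightParam b ^ 2) := by
    simp only [rightVertex, rightCirclePoint, PiLp.toLp_apply, Matrix.cons_val_two,
      Matrix.tail_cons, Matrix.head_cons]
    ring
  rw [h]
  exact div_pos (by linarith [neg_one_pow_mul_rightParam_pos b]) (by positivity)

lemma leftVertex_mem_edgeArc (a b : ℕ) : leftVertex a ∈ edgeArc a b :=
  ⟨leftVertex_mem_bicircle a _, (neg_one_pow_mul_leftVertex_one_pos a).le,
    by rw [leftVertex_two, mul_zero]⟩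

lemma rightVertex_mem_edgeArc (a b : ℕ) : rightVertex b ∈ edgeArc a b :=
  ⟨rightVertex_mem_bicircle b _, by rw [rightVertex_one, mul_zero],
    (neg_one_pow_mul_rightVertex_two_pos b).le⟩

lemma isArc_edgeArc (a b : ℕ) : IsArc 3 (edgeArc a b) :=
  isArc_quadrant (leftVertex_mem_bicircle a _) (leftVertex_two a)
    (neg_one_pow_mul_leftVertex_one_pos a) (rightVertex_mem_bicircle b _) (rightVertex_one b)
    (neg_one_pow_mul_rightVertex_two_pos b)

lemma neg_one_pow_eq_neg_of_div_two_eq (hne : a ≠ a') (h : a / 2 = a' / 2) :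
    (-1 : ℝ) ^ a' = -(-1) ^ a := by
  rcases (by omega : a' = a + 1 ∨ a = a' + 1) with rfl | rfl <;> ring

lemma eq_zero_of_neg_one_pow_mul_nonneg {t : ℝ} (hne : a ≠ a') (h : a / 2 = a' / 2)
    (ht : 0 ≤ (-1) ^ a * t) (ht' : 0 ≤ (-1) ^ a' * t) : t = 0 := by
  rw [neg_one_pow_eq_neg_of_div_two_eq hne h, neg_mul] at ht'
  simpa using le_antisymm (neg_nonneg.1 ht') ht

lemma one_eq_zero_of_mem_edgeArc (hx : x ∈ edgeArc a b) (hx' : x ∈ edgeArc a' b')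
    (ha : a ≠ a') : x 1 = 0 := by
  by_cases h : a / 2 = a' / 2
  · exact eq_zero_of_neg_one_pow_mul_nonneg ha h hx.2.1 hx'.2.1
  · exact one_eq_zero_of_mem_bicircle hx.1 hx'.1 (bicircleU_injective.ne h)

lemma two_eq_zero_of_mem_edgeArc (hx : x ∈ edgeArc a b) (hx' : x ∈ edgeArc a' b')
    (hb : b ≠ b') : x 2 = 0 := by
  by_cases h : b / 2 = b' / 2
  · exact eq_zero_of_neg_one_pow_mul_nonneg hb h hx.2.2 hx'.2.2
  · exact two_eq_zero_of_mem_bicircle hx.1 hx'.1 (bicircleS_injective.ne h)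

lemma mul_nonneg_of_neg_one_pow_mul_nonneg (n : ℕ) {t t' : ℝ} (ht : 0 ≤ (-1) ^ n * t)
    (ht' : 0 ≤ (-1) ^ n * t') : 0 ≤ t * t' := by
  have hsq : ((-1 : ℝ) ^ n) ^ 2 = 1 := by rw [← pow_mul, pow_mul', neg_one_sq, one_pow]
  have := mul_nonneg ht ht'
  linear_combination this + (t * t') * hsq

lemma eq_leftVertex_of_mem_edgeArc (hx : x ∈ edgeArc a b) (hx₂ : x 2 = 0) : x = leftVertex a :=
  eq_of_mem_bicircle_of_two_eq_zero hx.1 (leftVertex_mem_bicircle a _) hx₂ (leftVertex_two a)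
    (mul_nonneg_of_neg_one_pow_mul_nonneg a hx.2.1 (neg_one_pow_mul_leftVertex_one_pos a).le)

lemma eq_rightVertex_of_mem_edgeArc (hx : x ∈ edgeArc a b) (hx₁ : x 1 = 0) : x = rightVertex b :=
  eq_of_mem_bicircle_of_one_eq_zero hx.1 (rightVertex_mem_bicircle b _) hx₁ (rightVertex_one b)
    (mul_nonneg_of_neg_one_pow_mul_nonneg b hx.2.2 (neg_one_pow_mul_rightVertex_two_pos b).le)

lemma leftVertex_injective : Function.Injective leftVertex := fun a a' h => by
  by_contra hne
  have h₁ := one_eq_zero_of_mem_edgeArc (leftVertex_mem_edgeArc a 0)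
    (h ▸ leftVertex_mem_edgeArc a' 0) hne
  simpa [h₁] using neg_one_pow_mul_leftVertex_one_pos a

lemma rightVertex_injective : Function.Injective rightVertex := fun b b' h => by
  by_contra hne
  have h₂ := two_eq_zero_of_mem_edgeArc (rightVertex_mem_edgeArc 0 b)
    (h ▸ rightVertex_mem_edgeArc 0 b') hne
  simpa [h₂] using neg_one_pow_mul_rightVertex_two_pos b

lemma leftVertex_ne_rightVertex (a b : ℕ) : leftVertex a ≠ rightVertex b := fun h => by
  simpa [h, rightVertex_one] using neg_one_pow_mul_leftVertex_one_pos a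

lemma leftVertex_mem_edgeArc_iff : leftVertex a' ∈ edgeArc a b ↔ a' = a :=
  ⟨fun h => leftVertex_injective (eq_leftVertex_of_mem_edgeArc h (leftVertex_two a')),
    fun h => h ▸ leftVertex_mem_edgeArc a b⟩

lemma rightVertex_mem_edgeArc_iff : rightVertex b' ∈ edgeArc a b ↔ b' = b :=
  ⟨fun h => rightVertex_injective (eq_rightVertex_of_mem_edgeArc h (rightVertex_one b')),
    fun h => h ▸ rightVertex_mem_edgeArc a b⟩

lemma eq_vertex_of_mem_edgeArc_inter (hx : x ∈ edgeArc a b) (hx' : x ∈ edgeArc a' b')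
    (hne : (a, b) ≠ (a', b')) : (a = a' ∧ x = leftVertex a) ∨ (b = b' ∧ x = rightVertex b) := by
  by_cases ha : a = a'
  · have hb : b ≠ b' := fun hb => hne (by rw [ha, hb])
    exact Or.inl ⟨ha, eq_leftVertex_of_mem_edgeArc hx (two_eq_zero_of_mem_edgeArc hx hx' hb)⟩
  have hx₁ := one_eq_zero_of_mem_edgeArc hx hx' ha
  by_cases hb : b = b'
  · exact Or.inr ⟨hb, eq_rightVertex_of_mem_edgeArc hx hx₁⟩
  · exact ((ne_zero_or_ne_zero_of_mem_bicircle hx.1).elim (· hx₁)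
      (· (two_eq_zero_of_mem_edgeArc hx hx' hb))).elim

end Vertices

lemma exists_eq_mk_of_mem_edgeSet_completeBipartiteGraph {α β : Type*} {e : Sym2 (α ⊕ β)}
    (he : e ∈ (completeBipartiteGraph α β).edgeSet) : ∃ a b, e = s(Sum.inl a, Sum.inr b) := by
  induction e using Sym2.ind with
  | _ v w =>
    rcases v with a | b <;> rcases w with a' | b'
    · simp at he
    · exact ⟨a, b', rfl⟩
    · exact ⟨a', b, Sym2.eq_swap⟩
    · simp at he

def edgeArcOf {p q : ℕ} : Fin p ⊕ Fin q → Fin p ⊕ Fin q → Set ℝ³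
  | .inl a, .inr b => edgeArc a b
  | _, _ => ∅

def bipartiteArc (p q : ℕ) : Sym2 (Fin p ⊕ Fin q) → Set ℝ³ :=
  Sym2.lift ⟨fun v w => edgeArcOf v w ∪ edgeArcOf w v, fun _ _ => Set.union_comm _ _⟩

@[simp]
lemma bipartiteArc_mk {p q : ℕ} (a : Fin p) (b : Fin q) :
    bipartiteArc p q s(.inl a, .inr b) = edgeArc a b := by
  simp [bipartiteArc, edgeArcOf]

def completeBipartiteDrawing (p q : ℕ) :
    CircularArcDrawing 3 (completeBipartiteGraph (Fin p) (Fin q)) where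
  pos := Sum.elim (fun a => leftVertex a) (fun b => rightVertex b)
  inj := (leftVertex_injective.comp Fin.val_injective).sumElim
    (rightVertex_injective.comp Fin.val_injective) fun a b => leftVertex_ne_rightVertex a b
  arc := bipartiteArc p q
  arc_isArc e he := by
    obtain ⟨a, b, rfl⟩ := exists_eq_mk_of_mem_edgeSet_completeBipartiteGraph he
    simpa using isArc_edgeArc a b
  endpoint_mem e he v hv := by
    obtain ⟨a, b, rfl⟩ := exists_eq_mk_of_mem_edgeSet_completeBipartiteGraph he
    rcases Sym2.mem_iff.1 hv with rfl | rfl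
    · simpa using leftVertex_mem_edgeArc a b
    · simpa using rightVertex_mem_edgeArc a b
  crossFree e he f hf hne := by
    obtain ⟨a, b, rfl⟩ := exists_eq_mk_of_mem_edgeSet_completeBipartiteGraph he
    obtain ⟨a', b', rfl⟩ := exists_eq_mk_of_mem_edgeSet_completeBipartiteGraph hf
    ext x
    simp only [bipartiteArc_mk]
    constructor
    · rintro ⟨hx, hx'⟩
      have hne' : ((a : ℕ), (b : ℕ)) ≠ ((a' : ℕ), (b' : ℕ)) := fun h => hne (by
        rw [Fin.ext (congrArg Prod.fst h), Fin.ext (congrArg Prod.snd h)])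
      rcases eq_vertex_of_mem_edgeArc_inter hx hx' hne' with ⟨ha, rfl⟩ | ⟨hb, rfl⟩
      · exact ⟨.inl a, by simp [Fin.ext ha], rfl⟩
      · exact ⟨.inr b, by simp [Fin.ext hb], rfl⟩
    · rintro ⟨w, ⟨hw, hw'⟩, rfl⟩
      rcases Sym2.mem_iff.1 hw with rfl | rfl <;> simp at hw'
      · subst hw'; exact ⟨leftVertex_mem_edgeArc _ _, leftVertex_mem_edgeArc _ _⟩
      · subst hw'; exact ⟨rightVertex_mem_edgeArc _ _, rightVertex_mem_edgeArc _ _⟩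
  vertex_mem e he w hw := by
    obtain ⟨a, b, rfl⟩ := exists_eq_mk_of_mem_edgeSet_completeBipartiteGraph he
    rcases w with a' | b'
    · simpa [leftVertex_mem_edgeArc_iff, Fin.val_inj] using hw
    · simpa [rightVertex_mem_edgeArc_iff, Fin.val_inj] using hw

lemma isCircle_bicircle_bicircleU_bicircleS (i j : ℕ) :
    IsCircle 3 (bicircle (bicircleU i) (bicircleS j)) := by
  have hL := leftVertex_mem_bicircle (2 * i) (bicircleS j)
  have hR := rightVertex_mem_bicircle (2 * j) (bicircleU i)
  rw [Nat.mul_div_cancel_left i two_pos] at hL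
  rw [Nat.mul_div_cancel_left j two_pos] at hR
  exact isCircle_bicircle hL hR (leftVertex_ne_rightVertex _ _)

lemma completeBipartiteDrawing_coveredBy (p q : ℕ) :
    (completeBipartiteDrawing p q).CoveredBy
      ((Finset.range ((p + 1) / 2) ×ˢ Finset.range ((q + 1) / 2)).image
        fun ij => bicircle (bicircleU ij.1) (bicircleS ij.2)) := by
  intro e he
  obtain ⟨a, b, rfl⟩ := exists_eq_mk_of_mem_edgeSet_completeBipartiteGraph he
  refine ⟨_, Finset.mem_image.2 ⟨((a : ℕ) / 2, (b : ℕ) / 2), ?_, rfl⟩, ?_⟩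
  · simp only [Finset.mem_product, Finset.mem_range]
    omega
  · simp only [completeBipartiteDrawing, bipartiteArc_mk]
    exact fun x hx => hx.1

theorem completeBipartiteGraph_circle_cover_upper_bound_general (p q : ℕ) :
    ∃ (D : CircularArcDrawing 3 (completeBipartiteGraph (Fin p) (Fin q)))
      (𝒞 : Finset (Set (EuclideanSpace ℝ (Fin 3)))),
      (∀ C ∈ 𝒞, IsCircle 3 C) ∧ D.CoveredBy 𝒞 ∧
      𝒞.card ≤ ((p + 1) / 2) * ((q + 1) / 2) := by
  refine ⟨completeBipartiteDrawing p q, _, ?_, completeBipartiteDrawing_coveredBy p q, ?_⟩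
  · simp only [Finset.forall_mem_image]
    exact fun ij _ => isCircle_bicircle_bicircleU_bicircleS ij.1 ij.2
  · exact Finset.card_image_le.trans (by simp)

/-- For all positive integers `p` and `q`, the complete bipartite graph `K_{p,q}` admits a
crossing-free circular-arc drawing in `ℝ³` covered by at most `⌈p/2⌉·⌈q/2⌉` circles. -/
theorem completeBipartiteGraph_circle_cover_upper_bound (p q : ℕ) (hp : 0 < p) (hq : 0 < q) :
    ∃ (D : CircularArcDrawing 3 (completeBipartiteGraph (Fin p) (Fin q)))
      (𝒞 : Finset (Set (EuclideanSpace ℝ (Fin 3)))),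
      (∀ C ∈ 𝒞, IsCircle 3 C) ∧ D.CoveredBy 𝒞 ∧
      𝒞.card ≤ ((p + 1) / 2) * ((q + 1) / 2) :=
  completeBipartiteGraph_circle_cover_upper_bound_general p q
end
end

section
/- Every crossing-free straight-line drawing of the octahedron graph in ℝ³ that is covered by a family ℒ of lines satisfies |ℒ| ≥ 9. -/
open Set

noncomputable section

/-- A crossing-free straight-line drawing of a simple graph `G` in `ℝ^d`:
an injective map of the vertices to points such that each edge `uv` is represented by the
closed segment between the images of `u` and `v`, the segments of two distinct edges
intersect exactly in the images of their common endpoints, and no vertex image lies on the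
segment of a non-incident edge. -/
structure StraightLineDrawing (d : ℕ) {V : Type*} (G : SimpleGraph V) where
  pos : V → EuclideanSpace ℝ (Fin d)
  inj : Function.Injective pos
  crossFree : ∀ u v x y : V, G.Adj u v → G.Adj x y → s(u, v) ≠ s(x, y) →
    segment ℝ (pos u) (pos v) ∩ segment ℝ (pos x) (pos y)
      = pos '' ({u, v} ∩ {x, y} : Set V)
  vertex_mem : ∀ u v w : V, G.Adj u v → pos w ∈ segment ℝ (pos u) (pos v) → w = u ∨ w = v

/-- The straight-line drawing `D` of `G` is covered by the family `ℒ` of lines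
(1-dimensional affine subspaces): every edge segment lies in a line of `ℒ`. -/
def StraightLineDrawing.CoveredByLines {d : ℕ} {V : Type*} {G : SimpleGraph V}
    (D : StraightLineDrawing d G)
    (ℒ : Finset (AffineSubspace ℝ (EuclideanSpace ℝ (Fin d)))) : Prop :=
  (∀ L ∈ ℒ, Module.finrank ℝ L.direction = 1) ∧
  ∀ u v : V, G.Adj u v →
    ∃ L ∈ ℒ, segment ℝ (D.pos u) (D.pos v) ⊆ (L : Set (EuclideanSpace ℝ (Fin d)))

/-- The octahedron graph: the complete tripartite graph `K_{2,2,2}` on the six vertices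
`{0,…,5}` with parts `{0,3}`, `{1,4}`, `{2,5}`; two distinct vertices are adjacent iff
they are not opposite, i.e. iff they differ mod 3. -/
def octahedronGraph : SimpleGraph (Fin 6) where
  Adj i j := (i : ℕ) % 3 ≠ (j : ℕ) % 3
  symm := ⟨fun _ _ h => Ne.symm h⟩
  loopless := ⟨fun _ h => h rfl⟩

/-!
Order the vertices lying on a line by their position along it. A vertex strictly between two
others lies on the segment joining them, so those two are not adjacent. Hence the edges on a line
join consecutive vertices only, and a line through `n` vertices carries at most `n - 1` edges.
In the octahedron every vertex has exactly one non-neighbour, so no four vertices are collinear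
(the first would be non-adjacent to both the third and the fourth), and a line carrying two edges
passes through three vertices, hence through an opposite pair. Two vertices determine a line, so
at most three lines carry two edges, and the twelve edges need at least `12 - 3 = 9` lines.
-/

open Finset

theorem Collinear.exists_wbtw_of_le {k V P : Type*} [Field k] [LinearOrder k]
    [IsStrictOrderedRing k] [AddCommGroup V] [Module k V] [AddTorsor V P] {s : Set P}
    (hs : Collinear k s) :
    ∃ t : P → k, ∀ a ∈ s, ∀ b ∈ s, ∀ c ∈ s, t a ≤ t b → t b ≤ t c → Wbtw k a b c := by
  obtain ⟨p₀, v, hv⟩ := (collinear_iff_exists_forall_eq_smul_vadd s).1 hs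
  choose! t ht using hv
  refine ⟨t, fun a ha b hb c hc hab hbc => ?_⟩
  have := wbtw_smul_vadd_smul_vadd_of_nonneg_of_le (t a • v +ᵥ p₀) v (sub_nonneg.2 hab)
    (sub_le_sub_right hbc (t a))
  rwa [vadd_vadd, vadd_vadd, ← add_smul, ← add_smul, sub_add_cancel, sub_add_cancel,
    ← ht a ha, ← ht b hb, ← ht c hc] at this

theorem AffineSubspace.collinear_of_finrank_direction_eq_one {k V P : Type*} [DivisionRing k]
    [AddCommGroup V] [Module k V] [AddTorsor V P] {L : AffineSubspace k P}
    (hL : Module.finrank k L.direction = 1) : Collinear k (L : Set P) := by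
  have := Module.finite_of_finrank_eq_succ hL
  rw [Collinear, ← L.direction_eq_vectorSpan, ← Module.finrank_eq_rank, hL, Nat.cast_one]

theorem AffineSubspace.eq_of_collinear_of_mem_of_mem {k V P : Type*} [DivisionRing k]
    [AddCommGroup V] [Module k V] [AddTorsor V P] {L L' : AffineSubspace k P}
    (hL : Collinear k (L : Set P)) (hL' : Collinear k (L' : Set P)) {p q : P} (hpq : p ≠ q)
    (hp : p ∈ L) (hq : q ∈ L) (hp' : p ∈ L') (hq' : q ∈ L') : L = L' := by
  rw [← L.affineSpan_coe, ← L'.affineSpan_coe, ← hL.affineSpan_eq_of_ne hp hq hpq,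
    ← hL'.affineSpan_eq_of_ne hp' hq' hpq]

namespace StraightLineDrawing

variable {d : ℕ} {V : Type*} {G : SimpleGraph V} (D : StraightLineDrawing d G)

open Classical in
def verticesOn [Fintype V] (s : Set (EuclideanSpace ℝ (Fin d))) : Finset V :=
  {v | D.pos v ∈ s}

open Classical in
def edgesOn (H : SimpleGraph V) [Fintype H.edgeSet] (s : Set (EuclideanSpace ℝ (Fin d))) :
    Finset (Sym2 V) :=
  {e ∈ H.edgeFinset | ∀ v ∈ e, D.pos v ∈ s}

@[simp]
theorem mem_verticesOn [Fintype V] {s : Set (EuclideanSpace ℝ (Fin d))} {v : V} :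
    v ∈ D.verticesOn s ↔ D.pos v ∈ s := by
  simp [verticesOn]

@[simp]
theorem mk_mem_edgesOn {H : SimpleGraph V} [Fintype H.edgeSet]
    {s : Set (EuclideanSpace ℝ (Fin d))} {u v : V} :
    s(u, v) ∈ D.edgesOn H s ↔ H.Adj u v ∧ D.pos u ∈ s ∧ D.pos v ∈ s := by
  simp [edgesOn]

theorem compl_adj_of_wbtw {a b c : V} (h : Wbtw ℝ (D.pos a) (D.pos b) (D.pos c))
    (hba : b ≠ a) (hbc : b ≠ c) : Gᶜ.Adj a c := by
  refine ⟨?_, fun hac => ?_⟩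
  · rintro rfl
    exact hba (D.inj ((wbtw_self_iff ℝ).1 h))
  · rcases D.vertex_mem a c b hac h.mem_segment with rfl | rfl
    exacts [hba rfl, hbc rfl]

theorem eq_of_adj_of_adj_of_wbtw {u w w' : V} (hw : G.Adj u w) (hw' : G.Adj u w')
    (h : Wbtw ℝ (D.pos u) (D.pos w) (D.pos w')) : w = w' := by
  by_contra hne
  exact (D.compl_adj_of_wbtw h hw.ne' hne).2 hw'

theorem card_edgesOn_le_card_verticesOn_sub_one [Fintype V] [Fintype G.edgeSet]
    {s : Set (EuclideanSpace ℝ (Fin d))} (hs : Collinear ℝ s) :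
    #(D.edgesOn G s) ≤ #(D.verticesOn s) - 1 := by
  classical
  obtain ⟨t, ht⟩ := hs.exists_wbtw_of_le
  have ht_inj : ∀ a ∈ s, ∀ b ∈ s, t a = t b → a = b := fun a ha b hb hab =>
    ((wbtw_self_iff ℝ).1 (ht _ ha _ hb _ ha hab.le hab.ge)).symm
  rcases (D.edgesOn G s).eq_empty_or_nonempty with he | ⟨e₀, he₀⟩
  · simp [he]
  have hS : (D.verticesOn s).Nonempty := by
    induction e₀ using Sym2.ind with
    | _ a b => exact ⟨a, D.mem_verticesOn.2 (D.mk_mem_edgesOn.1 he₀).2.1⟩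
  obtain ⟨top, htop, hmax⟩ := (D.verticesOn s).exists_max_image (t ∘ D.pos) hS
  -- each edge goes to its lower endpoint along `s`, which is never `top`
  rw [← card_erase_of_mem htop]
  refine card_le_card_of_forall_subsingleton
    (fun e u => ∃ w, e = s(u, w) ∧ t (D.pos u) < t (D.pos w)) (fun e he => ?_) ?_
  · induction e using Sym2.ind with | _ a b => ?_
    obtain ⟨hab, ha, hb⟩ := D.mk_mem_edgesOn.1 he
    have htab : t (D.pos a) ≠ t (D.pos b) := fun h => hab.ne (D.inj (ht_inj _ ha _ hb h))
    rcases htab.lt_or_gt with h | h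
    · refine ⟨a, mem_erase.2 ⟨?_, D.mem_verticesOn.2 ha⟩, b, rfl, h⟩
      rintro rfl
      exact (hmax b (D.mem_verticesOn.2 hb)).not_gt h
    · refine ⟨b, mem_erase.2 ⟨?_, D.mem_verticesOn.2 hb⟩, a, Sym2.eq_swap, h⟩
      rintro rfl
      exact (hmax a (D.mem_verticesOn.2 ha)).not_gt h
  · rintro u - e ⟨he, w, rfl, huw⟩ e' ⟨he', w', rfl, huw'⟩
    obtain ⟨hw, hu, hws⟩ := D.mk_mem_edgesOn.1 he
    obtain ⟨hw', -, hw's⟩ := D.mk_mem_edgesOn.1 he'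
    suffices w = w' by rw [this]
    rcases le_total (t (D.pos w)) (t (D.pos w')) with h | h
    · exact D.eq_of_adj_of_adj_of_wbtw hw hw' (ht _ hu _ hws _ hw's huw.le h)
    · exact (D.eq_of_adj_of_adj_of_wbtw hw' hw (ht _ hu _ hw's _ hws huw'.le h)).symm

theorem edgesOn_compl_nonempty_of_two_lt_card [Fintype V] [Fintype Gᶜ.edgeSet]
    {s : Set (EuclideanSpace ℝ (Fin d))} (hs : Collinear ℝ s) (h : 2 < #(D.verticesOn s)) :
    (D.edgesOn Gᶜ s).Nonempty := by
  obtain ⟨x, hx, y, hy, z, hz, hxy, hxz, hyz⟩ := two_lt_card.1 h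
  simp only [mem_verticesOn] at hx hy hz
  have hxyz : Collinear ℝ {D.pos x, D.pos y, D.pos z} :=
    hs.subset (insert_subset_iff.2 ⟨hx, insert_subset_iff.2 ⟨hy, singleton_subset_iff.2 hz⟩⟩)
  rcases hxyz.wbtw_or_wbtw_or_wbtw with h | h | h
  · exact ⟨s(x, z), D.mk_mem_edgesOn.2 ⟨D.compl_adj_of_wbtw h hxy.symm hyz, hx, hz⟩⟩
  · exact ⟨s(y, x), D.mk_mem_edgesOn.2 ⟨D.compl_adj_of_wbtw h hyz.symm hxz.symm, hy, hx⟩⟩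
  · exact ⟨s(z, y), D.mk_mem_edgesOn.2 ⟨D.compl_adj_of_wbtw h hxz hxy, hz, hy⟩⟩

theorem sum_card_edgesOn_le_card_edgeFinset {H : SimpleGraph V} [Fintype H.edgeSet]
    {ℒ : Finset (AffineSubspace ℝ (EuclideanSpace ℝ (Fin d)))}
    (hℒ : ∀ L ∈ ℒ, Collinear ℝ (L : Set (EuclideanSpace ℝ (Fin d)))) :
    ∑ L ∈ ℒ, #(D.edgesOn H L) ≤ #H.edgeFinset := by
  classical
  rw [← card_biUnion]
  · exact card_le_card (biUnion_subset.2 fun L _ => filter_subset _ _)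
  · intro L hL L' hL' hLL'
    refine disjoint_left.2 fun e he he' => hLL' ?_
    induction e using Sym2.ind with | _ a b => ?_
    obtain ⟨hab, ha, hb⟩ := D.mk_mem_edgesOn.1 he
    obtain ⟨-, ha', hb'⟩ := D.mk_mem_edgesOn.1 he'
    exact AffineSubspace.eq_of_collinear_of_mem_of_mem (hℒ L hL) (hℒ L' hL')
      (D.inj.ne hab.ne) ha hb ha' hb'

theorem card_edgeFinset_le_sum_card_edgesOn [Fintype G.edgeSet]
    {ℒ : Finset (AffineSubspace ℝ (EuclideanSpace ℝ (Fin d)))} (hℒ : D.CoveredByLines ℒ) :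
    #G.edgeFinset ≤ ∑ L ∈ ℒ, #(D.edgesOn G L) := by
  classical
  refine (card_le_card fun e he => ?_).trans card_biUnion_le
  induction e using Sym2.ind with | _ u v => ?_
  have huv : G.Adj u v := by simpa using he
  obtain ⟨L, hL, hseg⟩ := hℒ.2 u v huv
  exact mem_biUnion.2 ⟨L, hL, D.mk_mem_edgesOn.2
    ⟨huv, hseg (left_mem_segment ℝ _ _), hseg (right_mem_segment ℝ _ _)⟩⟩

end StraightLineDrawing

instance : DecidableRel octahedronGraph.Adj :=
  fun i j => inferInstanceAs (Decidable ((i : ℕ) % 3 ≠ (j : ℕ) % 3))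

theorem octahedronGraph_card_edgeFinset : #octahedronGraph.edgeFinset = 12 := by decide

theorem octahedronGraph_compl_card_edgeFinset : #octahedronGraphᶜ.edgeFinset = 3 := by decide

theorem octahedronGraph_compl_adj_unique {a b c : Fin 6} (hab : octahedronGraphᶜ.Adj a b)
    (hac : octahedronGraphᶜ.Adj a c) : b = c := by
  revert a b c
  decide

namespace StraightLineDrawing

variable {d : ℕ} (D : StraightLineDrawing d octahedronGraph)

theorem card_verticesOn_le_three {s : Set (EuclideanSpace ℝ (Fin d))} (hs : Collinear ℝ s) :
    #(D.verticesOn s) ≤ 3 := by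
  by_contra! h
  obtain ⟨t, ht⟩ := hs.exists_wbtw_of_le
  obtain ⟨m, hm, hmin⟩ := (D.verticesOn s).exists_min_image (t ∘ D.pos) (card_pos.1 (by omega))
  obtain ⟨m', hm', hmin'⟩ :=
    ((D.verticesOn s).erase m).exists_min_image (t ∘ D.pos) (card_pos.1 (by
      rw [card_erase_of_mem hm]; omega))
  obtain ⟨q, hq, r, hr, hqr⟩ := one_lt_card.1 (show 1 < #(((D.verticesOn s).erase m).erase m') by
    rw [card_erase_of_mem hm', card_erase_of_mem hm]; omega)
  have hadj : ∀ x ∈ ((D.verticesOn s).erase m).erase m', octahedronGraphᶜ.Adj m x := by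
    intro x hx
    have hx' := mem_of_mem_erase hx
    have hm's := mem_of_mem_erase hm'
    exact D.compl_adj_of_wbtw
      (ht _ (D.mem_verticesOn.1 hm) _ (D.mem_verticesOn.1 hm's) _
        (D.mem_verticesOn.1 (mem_of_mem_erase hx')) (hmin _ hm's) (hmin' _ hx'))
      (ne_of_mem_erase hm') (ne_of_mem_erase hx).symm
  exact hqr (octahedronGraph_compl_adj_unique (hadj q hq) (hadj r hr))

theorem card_edgesOn_le_one_add_card_edgesOn_compl {s : Set (EuclideanSpace ℝ (Fin d))}
    (hs : Collinear ℝ s) :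
    #(D.edgesOn octahedronGraph s) ≤ 1 + #(D.edgesOn octahedronGraphᶜ s) := by
  have hV := D.card_verticesOn_le_three hs
  have hE := D.card_edgesOn_le_card_verticesOn_sub_one hs
  rcases lt_or_ge #(D.verticesOn s) 3 with h | h
  · omega
  · have := (D.edgesOn_compl_nonempty_of_two_lt_card hs (by omega)).card_pos
    omega

end StraightLineDrawing

/-- Every crossing-free straight-line drawing of the octahedron graph in `ℝ³` covered by a
family `ℒ` of lines satisfies `|ℒ| ≥ 9`. -/
theorem octahedron_line_cover_lower_bound
    (D : StraightLineDrawing 3 octahedronGraph)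
    (ℒ : Finset (AffineSubspace ℝ (EuclideanSpace ℝ (Fin 3))))
    (hcov : D.CoveredByLines ℒ) :
    9 ≤ ℒ.card := by
  have hℒ : ∀ L ∈ ℒ, Collinear ℝ (L : Set (EuclideanSpace ℝ (Fin 3))) := fun L hL =>
    AffineSubspace.collinear_of_finrank_direction_eq_one (hcov.1 L hL)
  refine Nat.le_of_add_le_add_right (b := 3) ?_
  calc
    9 + 3 = #octahedronGraph.edgeFinset := octahedronGraph_card_edgeFinset.symm
    _ ≤ ∑ L ∈ ℒ, #(D.edgesOn octahedronGraph L) := D.card_edgeFinset_le_sum_card_edgesOn hcov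
    _ ≤ ∑ L ∈ ℒ, (1 + #(D.edgesOn octahedronGraphᶜ L)) :=
      sum_le_sum fun L hL => D.card_edgesOn_le_one_add_card_edgesOn_compl (hℒ L hL)
    _ = #ℒ + ∑ L ∈ ℒ, #(D.edgesOn octahedronGraphᶜ L) := by rw [sum_add_distrib, card_eq_sum_ones]
    _ ≤ #ℒ + #octahedronGraphᶜ.edgeFinset :=
      Nat.add_le_add_left (D.sum_card_edgesOn_le_card_edgeFinset hℒ) _
    _ = #ℒ + 3 := by rw [octahedronGraph_compl_card_edgeFinset]
end
end

section
/- Let d ≥ 2 and let G be a finite simple graph that admits a crossing-free circular-arc drawing in ℝ^d covered by a family of r circles. Then the linear arboricity of G satisfies la(G) ≤ ⌈3r/2⌉, i.e., the edge set of G can be partitioned into at most r + ⌈r/2⌉ linear forests. -/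
open Set

noncomputable section

/-!
Each circle `C` of the cover carries the subgraph of edges drawn on it. This subgraph has maximum
degree two, since three arcs of `C` cannot leave a common point while meeting only there. Deleting
any edge `e` from it leaves a forest: a point `q` of the arc of `e` that is not a vertex lies on no
other arc, so the remaining arcs live in `C \ {q}`, which injects continuously into `ℝ`; on a cycle,
the vertex whose image is largest would have both cycle neighbours below it, and the two arcs
joining it to them would then overlap in more than their common endpoint. So the `r` classes become
linear forests after deleting one edge each, and the `r` deleted edges, grouped in pairs, form
`⌈r/2⌉` further linear forests.
-/

open Filter Topology

section CircleLike

variable {X : Type*} [TopologicalSpace X]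

/-- The only property of circles that the arc arguments use. -/
def IsCircleLike (C : Set X) : Prop :=
  ∀ q ∈ C, ∃ g : X → ℝ, InjOn g (C \ {q}) ∧ ContinuousOn g (C \ {q})

theorem IsCircleLike.of_mapsTo {Y : Type*} [TopologicalSpace Y] {S : Set Y} (hS : IsCircleLike S)
    {C : Set X} {Ψ : X → Y} (hΨ : ContinuousOn Ψ C) (hinj : InjOn Ψ C) (hmaps : MapsTo Ψ C S) :
    IsCircleLike C := by
  intro q hq
  obtain ⟨g, hg, hgc⟩ := hS (Ψ q) (hmaps hq)
  have hmaps' : MapsTo Ψ (C \ {q}) (S \ {Ψ q}) :=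
    fun z hz => ⟨hmaps hz.1, fun h => hz.2 (hinj hz.1 hq h)⟩
  exact ⟨g ∘ Ψ, hg.comp (hinj.mono sdiff_subset) hmaps', hgc.comp (hΨ.mono sdiff_subset) hmaps'⟩

theorem Set.OrdConnected.eq_or_eq_of_inter_eq_singleton {α : Type*} [LinearOrder α]
    {I J : Set α} (hI : I.OrdConnected) (hJ : J.OrdConnected) {t x y : α} (hIJ : I ∩ J = {t})
    (hx : x ∈ I) (hy : y ∈ J) (hside : x ≤ t ∧ y ≤ t ∨ t ≤ x ∧ t ≤ y) : x = t ∨ y = t := by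
  have ht : t ∈ I ∩ J := hIJ ▸ rfl
  rcases hside with ⟨hxt, hyt⟩ | ⟨hxt, hyt⟩
  · have hm : max x y ∈ I ∩ J := ⟨hI.out hx ht.1 ⟨le_max_left x y, max_le hxt hyt⟩,
      hJ.out hy ht.2 ⟨le_max_right x y, max_le hxt hyt⟩⟩
    rw [hIJ, mem_singleton_iff] at hm
    rcases max_choice x y with h | h
    exacts [Or.inl (h.symm.trans hm), Or.inr (h.symm.trans hm)]
  · have hm : min x y ∈ I ∩ J := ⟨hI.out ht.1 hx ⟨le_min hxt hyt, min_le_left x y⟩,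
      hJ.out ht.2 hy ⟨le_min hxt hyt, min_le_right x y⟩⟩
    rw [hIJ, mem_singleton_iff] at hm
    rcases min_choice x y with h | h
    exacts [Or.inl (h.symm.trans hm), Or.inr (h.symm.trans hm)]

theorem Set.OrdConnected.union_mem_nhds_of_inter_eq_singleton {α : Type*} [LinearOrder α]
    [TopologicalSpace α] [OrderClosedTopology α] {I J : Set α} (hI : I.OrdConnected)
    (hJ : J.OrdConnected) {t x y : α} (hIJ : I ∩ J = {t}) (hx : x ∈ I) (hy : y ∈ J)
    (hxt : x ≠ t) (hyt : y ≠ t) : I ∪ J ∈ 𝓝 t := by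
  have ht : t ∈ I ∩ J := hIJ ▸ rfl
  have hopp : ¬(x ≤ t ∧ y ≤ t ∨ t ≤ x ∧ t ≤ y) := fun h =>
    (hI.eq_or_eq_of_inter_eq_singleton hJ hIJ hx hy h).elim hxt hyt
  rcases hxt.lt_or_gt with hlt | hgt
  · refine mem_of_superset (Icc_mem_nhds hlt (lt_of_not_ge fun h => hopp (.inl ⟨hlt.le, h⟩)))
      ((Icc_subset_Icc_union_Icc (b := t)).trans
        (union_subset_union (hI.out hx ht.1) (hJ.out ht.2 hy)))
  · refine mem_of_superset (Icc_mem_nhds (lt_of_not_ge fun h => hopp (.inr ⟨hgt.le, h⟩)) hgt)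
      ((Icc_subset_Icc_union_Icc (b := t)).trans ?_)
    rw [union_comm]
    exact union_subset_union (hI.out ht.1 hx) (hJ.out hy ht.2)

theorem eq_or_eq_of_inter_eq_singleton_of_le {g : X → ℝ} {s A B : Set X} (hg : InjOn g s)
    (hgc : ContinuousOn g s) (hAs : A ⊆ s) (hBs : B ⊆ s) (hA : IsPreconnected A)
    (hB : IsPreconnected B) {p x y : X} (hAB : A ∩ B = {p}) (hx : x ∈ A) (hy : y ∈ B)
    (hxp : g x ≤ g p) (hyp : g y ≤ g p) : x = p ∨ y = p := by
  have hp : p ∈ A ∩ B := hAB ▸ rfl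
  exact ((hA.image g (hgc.mono hAs)).ordConnected.eq_or_eq_of_inter_eq_singleton
    (hB.image g (hgc.mono hBs)).ordConnected
    (by rw [← hg.image_inter hAs hBs, hAB, image_singleton]) (mem_image_of_mem g hx)
    (mem_image_of_mem g hy) (.inl ⟨hxp, hyp⟩)).imp
    (hg (hAs hx) (hAs hp.1)) (hg (hBs hy) (hBs hp.2))

variable [T1Space X]

theorem IsPreconnected.exists_mem_ne_of_mem_nhds {S U : Set X} (hS : IsPreconnected S) {p x : X}
    (hp : p ∈ S) (hx : x ∈ S) (hxp : x ≠ p) (hU : U ∈ 𝓝 p) : ∃ y ∈ S ∩ U, y ≠ p := by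
  obtain ⟨O, hOU, hO, hpO⟩ := mem_nhds_iff.1 hU
  obtain ⟨y, hyS, hyO, hyp⟩ := hS O {p}ᶜ hO isOpen_compl_singleton
    (fun z _ => (em (z = p)).imp (fun h : z = p => h ▸ hpO) id) ⟨p, hp, hpO⟩ ⟨x, hx, hxp⟩
  exact ⟨y, ⟨hyS, hOU hyO⟩, hyp⟩

theorem IsCircleLike.union_mem_nhdsWithin {C A B : Set X} (hC : IsCircleLike C) (hAC : A ⊆ C)
    (hBC : B ⊆ C) (hA : IsPreconnected A) (hB : IsPreconnected B) {p x y : X}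
    (hAB : A ∩ B = {p}) (hx : x ∈ A) (hy : y ∈ B) (hxp : x ≠ p) (hyp : y ≠ p) :
    A ∪ B ∈ 𝓝[C] p := by
  by_cases hcov : C ⊆ A ∪ B
  · exact mem_of_superset self_mem_nhdsWithin hcov
  obtain ⟨q, hqC, hqAB⟩ := not_subset.1 hcov
  obtain ⟨g, hg, hgc⟩ := hC q hqC
  have hAq : A ⊆ C \ {q} := fun z hz => ⟨hAC hz, fun h => hqAB (.inl (h ▸ hz))⟩
  have hBq : B ⊆ C \ {q} := fun z hz => ⟨hBC hz, fun h => hqAB (.inr (h ▸ hz))⟩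
  have hp : p ∈ A ∩ B := hAB ▸ rfl
  have hgAB : g '' (A ∪ B) ∈ 𝓝 (g p) := by
    rw [image_union]
    exact (hA.image g (hgc.mono hAq)).ordConnected.union_mem_nhds_of_inter_eq_singleton
      (hB.image g (hgc.mono hBq)).ordConnected
      (by rw [← hg.image_inter hAq hBq, hAB, image_singleton]) (mem_image_of_mem g hx)
      (mem_image_of_mem g hy) (fun h => hxp (hg (hAq hx) (hAq hp.1) h))
      (fun h => hyp (hg (hBq hy) (hBq hp.2) h))
  have hAB_nhds : A ∪ B ∈ 𝓝[C \ {q}] p := by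
    rw [← hg.preimage_image_inter (union_subset hAq hBq)]
    exact inter_mem ((hgc p (hAq hp.1)).preimage_mem_nhdsWithin hgAB) self_mem_nhdsWithin
  rwa [sdiff_eq, nhdsWithin_inter_of_mem'
    (mem_nhdsWithin_of_mem_nhds (compl_singleton_mem_nhds fun h : p = q => hqAB (.inl (h ▸ hp.1))))]
    at hAB_nhds

theorem IsCircleLike.subset_singleton_of_inter_eq_singleton {C A B E : Set X}
    (hC : IsCircleLike C) (hAC : A ⊆ C) (hBC : B ⊆ C) (hEC : E ⊆ C) (hA : IsPreconnected A)
    (hB : IsPreconnected B) (hE : IsPreconnected E) {p x y : X} (hAB : A ∩ B = {p})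
    (hAE : A ∩ E = {p}) (hBE : B ∩ E = {p}) (hx : x ∈ A) (hy : y ∈ B) (hxp : x ≠ p)
    (hyp : y ≠ p) : E ⊆ {p} := by
  intro z hz
  by_contra hzp
  obtain ⟨U, hU, hUC⟩ := mem_nhdsWithin_iff_exists_mem_nhds_inter.1
    (hC.union_mem_nhdsWithin hAC hBC hA hB hAB hx hy hxp hyp)
  have hpE : p ∈ E := (hAE ▸ rfl : p ∈ A ∩ E).2
  obtain ⟨w, ⟨hwE, hwU⟩, hwp⟩ := hE.exists_mem_ne_of_mem_nhds hpE hz hzp hU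
  rcases hUC ⟨hwU, hEC hwE⟩ with hwA | hwB
  · exact hwp (hAE ▸ (⟨hwA, hwE⟩ : w ∈ A ∩ E) : w ∈ ({p} : Set X))
  · exact hwp (hBE ▸ (⟨hwB, hwE⟩ : w ∈ B ∩ E) : w ∈ ({p} : Set X))

end CircleLike

theorem isCircleLike_sphere (ρ : ℝ) : IsCircleLike (Metric.sphere (0 : ℂ) ρ) := by
  intro q hq
  have key : ∀ z ∈ Metric.sphere (0 : ℂ) ρ \ {q}, ‖-(z / q)‖ = 1 ∧ -(z / q) ≠ -1 := by
    rintro z ⟨hz, hzq⟩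
    rw [mem_sphere_zero_iff_norm] at hz hq
    have hq0 : q ≠ 0 := by
      rintro rfl
      exact hzq (norm_eq_zero.1 (by rw [hz, ← hq, norm_zero]))
    refine ⟨by rw [norm_neg, norm_div, hz, ← hq, div_self (norm_ne_zero_iff.2 hq0)], fun h => ?_⟩
    exact hzq ((div_eq_one_iff_eq hq0).1 (neg_inj.1 h))
  -- `z ↦ -(z / q)` moves `q` to `-1`, the only point of the unit circle where `arg` jumps.
  refine ⟨fun z => Complex.arg (-(z / q)), fun z hz w hw h => ?_, fun z hz => ?_⟩
  · have := Complex.ext_norm_arg ((key z hz).1.trans (key w hw).1.symm) h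
    rwa [neg_inj, div_left_inj' fun hq0 => by simpa [hq0] using (key z hz).1] at this
  · refine (Complex.continuousAt_arg ?_).comp_continuousWithinAt (by fun_prop)
    refine Complex.mem_slitPlane_iff_arg.2 ⟨fun h => (key z hz).2 ?_, fun h => ?_⟩
    · exact Complex.ext_norm_arg (by rw [(key z hz).1, norm_neg, norm_one])
        (h.trans Complex.arg_neg_one.symm)
    · simpa [h] using (key z hz).1

theorem IsCircle.isCircleLike {d : ℕ} {C : Set (EuclideanSpace ℝ (Fin d))} (hC : IsCircle d C) :
    IsCircleLike C := by
  obtain ⟨P, c, r, hdim, hcP, -, rfl⟩ := hC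
  let L : ℂ ≃ₗᵢ[ℝ] P.direction :=
    Complex.isometryOfOrthonormal ((stdOrthonormalBasis ℝ P.direction).reindex (finCongr hdim))
  let π := P.direction.orthogonalProjectionOnto
  have hπ : ∀ x ∈ P, (π (x - c) : EuclideanSpace ℝ (Fin d)) = x - c := fun x hx =>
    congrArg Subtype.val (Submodule.orthogonalProjectionOnto_mem_subspace_eq_self
      (⟨x - c, AffineSubspace.vsub_mem_direction hx hcP⟩ : P.direction))
  refine (isCircleLike_sphere r).of_mapsTo (Ψ := fun x => L.symm (π (x - c))) (by fun_prop)
    (fun x hx y hy hxy => ?_) fun x hx => ?_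
  · have := congrArg Subtype.val (L.symm.injective hxy)
    rw [hπ x hx.1, hπ y hy.1] at this
    exact sub_left_inj.1 this
  · rw [mem_sphere_zero_iff_norm, L.symm.norm_map, ← Submodule.norm_coe, hπ x hx.1,
      ← dist_eq_norm, hx.2]

theorem Set.encard_iUnion_le_card {α ι : Type*} [Fintype ι] {s : ι → Set α}
    (hs : ∀ i, (s i).Subsingleton) : (⋃ i, s i).encard ≤ Fintype.card ι :=
  (encard_iUnion_le_of_fintype s).trans <| by
    simpa using Finset.sum_le_sum fun i (_ : i ∈ Finset.univ) =>
      encard_le_one_iff_subsingleton.2 (hs i)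

theorem exists_card_fiber_le_two (ι : Type*) [Fintype ι] :
    ∃ π : ι → Fin ((Fintype.card ι + 1) / 2), ∀ j, Fintype.card {i // π i = j} ≤ 2 := by
  let n : ι → ℕ := fun i => Fintype.equivFin ι i
  have hn : ∀ i, n i < Fintype.card ι := fun i => (Fintype.equivFin ι i).isLt
  refine ⟨fun i => ⟨n i / 2, by have := hn i; omega⟩, fun j => ?_⟩
  refine le_trans (Fintype.card_le_of_injective
    (fun i => (⟨n i.1 % 2, Nat.mod_lt _ two_pos⟩ : Fin 2)) ?_) (Fintype.card_fin 2).le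
  intro a b hab
  apply Subtype.ext
  apply (Fintype.equivFin ι).injective
  apply Fin.ext
  have ha := congrArg Fin.val a.2
  have hb := congrArg Fin.val b.2
  have hab := congrArg Fin.val hab
  simp only at ha hb hab
  change n a = n b
  omega

namespace SimpleGraph

variable {V ι κ : Type*} {G : SimpleGraph V}

def IsLinearForest (H : SimpleGraph V) : Prop :=
  H.IsAcyclic ∧ ∀ v, (H.neighborSet v).ncard ≤ 2

def IsEdgePartition (G : SimpleGraph V) (H : ι → SimpleGraph V) : Prop :=
  (∀ i, H i ≤ G) ∧ ∀ e ∈ G.edgeSet, ∃! i, e ∈ (H i).edgeSet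

theorem isLinearForest_of_encard_edgeSet_le_two {H : SimpleGraph V} (h : H.edgeSet.encard ≤ 2) :
    H.IsLinearForest := by
  classical
  refine ⟨fun u c hc => ?_, fun v => ?_⟩
  · have hsub : (c.edges.toFinset : Set (Sym2 V)) ⊆ H.edgeSet :=
      fun e he => c.edges_subset_edgeSet (List.mem_toFinset.1 he)
    have hlen := (encard_le_encard hsub).trans h
    rw [encard_coe_eq_coe_finsetCard, List.toFinset_card_of_nodup hc.edges_nodup,
      c.length_edges] at hlen
    have := hc.three_le_length
    exact absurd hlen (by exact_mod_cast (by omega : ¬c.length ≤ 2))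
  · rw [ncard_def]
    exact ENat.toNat_le_of_le_natCast <| (encard_le_encard_of_injOn (f := fun u => s(v, u))
      (fun u hu => hu) fun a _ b _ hab => Sym2.congr_right.1 hab).trans h

theorem EdgeLabeling.mem_edgeSet_labelGraph {K : Type*} {c : G.EdgeLabeling K} {k : K}
    {e : Sym2 V} : e ∈ (c.labelGraph k).edgeSet ↔ ∃ he : e ∈ G.edgeSet, c ⟨e, he⟩ = k := by
  rw [EdgeLabeling.labelGraph, edgeSet_fromEdgeSet]
  exact ⟨fun h => h.1, fun h => ⟨h, G.not_isDiag_of_mem_edgeSet h.1⟩⟩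

theorem EdgeLabeling.isEdgePartition_labelGraph {K : Type*} (c : G.EdgeLabeling K) :
    G.IsEdgePartition c.labelGraph :=
  ⟨fun _ => c.labelGraph_le, fun e he => ⟨c ⟨e, he⟩, mem_edgeSet_labelGraph.2 ⟨he, rfl⟩,
    fun _ hk => (mem_edgeSet_labelGraph.1 hk).2.symm⟩⟩

theorem IsEdgePartition.comp_equiv {H : ι → SimpleGraph V} (h : G.IsEdgePartition H)
    (e : κ ≃ ι) : G.IsEdgePartition (H ∘ e) :=
  ⟨fun k => h.1 (e k), fun f hf => e.existsUnique_congr_right.2 (h.2 f hf)⟩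

theorem IsEdgePartition.sum_deleteEdges {F : ι → SimpleGraph V} (hF : G.IsEdgePartition F)
    {s : ι → Set (Sym2 V)} (hs : ∀ i, s i ⊆ (F i).edgeSet) (π : ι → κ) :
    G.IsEdgePartition (Sum.elim (fun i => (F i).deleteEdges (s i))
      fun j => fromEdgeSet (⋃ i : {i // π i = j}, s i)) := by
  have hsG : ∀ i, s i ⊆ G.edgeSet := fun i => (hs i).trans (edgeSet_mono (hF.1 i))
  refine ⟨?_, fun e he => ?_⟩
  · rintro (i | j)
    · exact (deleteEdges_le _).trans (hF.1 i)
    · exact (fromEdgeSet_le G).2 fun e he => (iUnion_subset fun (i : {i // π i = j}) => hsG i) he.1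
  obtain ⟨i₀, hi₀, huniq⟩ := hF.2 e he
  have hs_eq : ∀ i, e ∈ s i → i = i₀ := fun i hi => huniq i (hs i hi)
  have hdiag := G.not_isDiag_of_mem_edgeSet he
  by_cases he₀ : e ∈ s i₀
  · refine ⟨.inr (π i₀), ?_, ?_⟩
    · simp only [Sum.elim_inr, edgeSet_fromEdgeSet]
      exact ⟨mem_iUnion.2 ⟨⟨i₀, rfl⟩, he₀⟩, hdiag⟩
    rintro (i | j) hmem
    · simp only [Sum.elim_inl, edgeSet_deleteEdges] at hmem
      obtain ⟨hmem, hmem'⟩ := hmem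
      exact absurd he₀ (huniq i hmem ▸ hmem')
    · simp only [Sum.elim_inr, edgeSet_fromEdgeSet] at hmem
      obtain ⟨⟨i, rfl⟩, hi⟩ := mem_iUnion.1 hmem.1
      rw [hs_eq i hi]
  · refine ⟨.inl i₀, ?_, ?_⟩
    · simp only [Sum.elim_inl, edgeSet_deleteEdges]
      exact ⟨hi₀, he₀⟩
    rintro (i | j) hmem
    · simp only [Sum.elim_inl, edgeSet_deleteEdges] at hmem
      rw [huniq i hmem.1]
    · simp only [Sum.elim_inr, edgeSet_fromEdgeSet] at hmem
      obtain ⟨⟨i, rfl⟩, hi⟩ := mem_iUnion.1 hmem.1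
      exact absurd (hs_eq i hi ▸ hi) he₀

theorem IsEdgePartition.exists_isLinearForest [Fintype ι] {F : ι → SimpleGraph V}
    (hF : G.IsEdgePartition F) {s : ι → Set (Sym2 V)} (hs : ∀ i, s i ⊆ (F i).edgeSet)
    (hs1 : ∀ i, (s i).Subsingleton) (hlin : ∀ i, ((F i).deleteEdges (s i)).IsLinearForest) :
    ∃ (N : ℕ) (H : Fin N → SimpleGraph V), N ≤ Fintype.card ι + (Fintype.card ι + 1) / 2 ∧
      G.IsEdgePartition H ∧ ∀ k, (H k).IsLinearForest := by
  obtain ⟨π, hπ⟩ := exists_card_fiber_le_two ι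
  let H' := Sum.elim (fun i => (F i).deleteEdges (s i))
    fun j => fromEdgeSet (⋃ i : {i // π i = j}, s i)
  have hH' : ∀ x, (H' x).IsLinearForest := by
    rintro (i | j)
    · exact hlin i
    · refine isLinearForest_of_encard_edgeSet_le_two ?_
      calc (fromEdgeSet (⋃ i : {i // π i = j}, s i)).edgeSet.encard
          ≤ (⋃ i : {i // π i = j}, s i).encard := by
            rw [edgeSet_fromEdgeSet]
            exact encard_le_encard sdiff_subset
        _ ≤ Fintype.card {i // π i = j} := encard_iUnion_le_card fun i => hs1 i
        _ ≤ 2 := by exact_mod_cast hπ j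
  let e := Fintype.equivFin (ι ⊕ Fin ((Fintype.card ι + 1) / 2))
  exact ⟨_, H' ∘ e.symm, by simp, (hF.sum_deleteEdges hs π).comp_equiv e.symm, fun k => hH' _⟩

end SimpleGraph

namespace CircularArcDrawing

open SimpleGraph

variable {d : ℕ} {V : Type*} {G H : SimpleGraph V} (D : CircularArcDrawing d G)
  {C : Set (EuclideanSpace ℝ (Fin d))}

theorem isPreconnected_arc {e : Sym2 V} (he : e ∈ G.edgeSet) : IsPreconnected (D.arc e) := by
  obtain ⟨-, -, -, -, hconn⟩ := D.arc_isArc e he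
  exact hconn.isPreconnected

theorem arc_inter_arc_eq_singleton {w x y : V} (hx : G.Adj w x) (hy : G.Adj w y) (hxy : x ≠ y) :
    D.arc s(w, x) ∩ D.arc s(w, y) = {D.pos w} := by
  rw [D.crossFree _ hx _ hy fun h => hxy (Sym2.congr_right.1 h), ← image_singleton]
  congr 1
  ext z
  simp only [Sym2.mem_iff, mem_ofPred_eq, mem_singleton_iff]
  constructor
  · rintro ⟨h | rfl, h' | rfl⟩
    exacts [h, h, h', (hxy rfl).elim]
  · rintro rfl
    exact ⟨.inl rfl, .inl rfl⟩

theorem ncard_neighborSet_le_two (hC : IsCircleLike C) (hH : H ≤ G)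
    (harc : ∀ e ∈ H.edgeSet, D.arc e ⊆ C) (v : V) : (H.neighborSet v).ncard ≤ 2 := by
  by_contra! h
  obtain ⟨x, y, z, hx, hy, hz, hxy, hxz, hyz⟩ :=
    (two_lt_ncard_iff (finite_of_ncard_pos (by omega))).1 h
  have hGx : G.Adj v x := hH hx
  have hGy : G.Adj v y := hH hy
  have hGz : G.Adj v z := hH hz
  have hzv := hC.subset_singleton_of_inter_eq_singleton (harc _ hx) (harc _ hy) (harc _ hz)
    (D.isPreconnected_arc hGx) (D.isPreconnected_arc hGy) (D.isPreconnected_arc hGz)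
    (D.arc_inter_arc_eq_singleton hGx hGy hxy) (D.arc_inter_arc_eq_singleton hGx hGz hxz)
    (D.arc_inter_arc_eq_singleton hGy hGz hyz) (D.endpoint_mem _ hGx x (Sym2.mem_mk_right v x))
    (D.endpoint_mem _ hGy y (Sym2.mem_mk_right v y)) (fun h => hGx.ne (D.inj h).symm)
    (fun h => hGy.ne (D.inj h).symm) (D.endpoint_mem _ hGz z (Sym2.mem_mk_right v z))
  exact hGz.ne (D.inj hzv).symm

theorem isAcyclic_of_arc_subset_diff_singleton (hC : IsCircleLike C) {q} (hq : q ∈ C)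
    (hH : H ≤ G) (harc : ∀ e ∈ H.edgeSet, D.arc e ⊆ C \ {q}) : H.IsAcyclic := by
  classical
  intro u c hc
  obtain ⟨g, hg, hgc⟩ := hC q hq
  obtain ⟨w, hw, hmax⟩ := c.support.toFinset.exists_max_image (g ∘ D.pos)
    ⟨u, List.mem_toFinset.2 c.start_mem_support⟩
  obtain ⟨x, y, hxy, hnbr⟩ :=
    ncard_eq_two.1 (hc.ncard_neighborSet_toSubgraph_eq_two (List.mem_toFinset.1 hw))
  have hbelow : ∀ z ∈ c.toSubgraph.neighborSet w, H.Adj w z ∧ g (D.pos z) ≤ g (D.pos w) :=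
    fun z hz => ⟨hz.adj_sub, hmax z (List.mem_toFinset.2 (c.mem_support_of_adj_toSubgraph hz.symm))⟩
  obtain ⟨hHx, hgx⟩ := hbelow x (hnbr ▸ .inl rfl)
  obtain ⟨hHy, hgy⟩ := hbelow y (hnbr ▸ .inr rfl)
  have hGx : G.Adj w x := hH hHx
  have hGy : G.Adj w y := hH hHy
  rcases eq_or_eq_of_inter_eq_singleton_of_le hg hgc (harc _ hHx) (harc _ hHy)
    (D.isPreconnected_arc hGx) (D.isPreconnected_arc hGy) (D.arc_inter_arc_eq_singleton hGx hGy hxy)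
    (D.endpoint_mem _ hGx x (Sym2.mem_mk_right w x))
    (D.endpoint_mem _ hGy y (Sym2.mem_mk_right w y)) hgx hgy with h | h
  exacts [hGx.ne (D.inj h).symm, hGy.ne (D.inj h).symm]

theorem isAcyclic_deleteEdges_singleton (hC : IsCircleLike C) (hH : H ≤ G)
    (harc : ∀ e ∈ H.edgeSet, D.arc e ⊆ C) {e : Sym2 V} (he : e ∈ H.edgeSet) :
    (H.deleteEdges {e}).IsAcyclic := by
  induction e using Sym2.ind with | _ u v => ?_
  have hG : G.Adj u v := hH he
  obtain ⟨q, ⟨hq, hqv⟩, hqu⟩ := (D.isPreconnected_arc hG).exists_mem_ne_of_mem_nhds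
    (D.endpoint_mem _ hG u (Sym2.mem_mk_left u v)) (D.endpoint_mem _ hG v (Sym2.mem_mk_right u v))
    (fun h => hG.ne (D.inj h).symm) (compl_singleton_mem_nhds fun h => hG.ne (D.inj h))
  refine D.isAcyclic_of_arc_subset_diff_singleton hC (harc _ he hq) ((H.deleteEdges_le _).trans hH)
    fun f hf => ?_
  rw [edgeSet_deleteEdges] at hf
  refine fun z hz => ⟨harc f hf.1 hz, ?_⟩
  rintro rfl
  have hz' : z ∈ D.arc f ∩ D.arc s(u, v) := ⟨hz, hq⟩
  rw [D.crossFree f (edgeSet_mono hH hf.1) _ hG hf.2] at hz'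
  obtain ⟨w, ⟨-, hw⟩, rfl⟩ := hz'
  rcases Sym2.mem_iff.1 hw with rfl | rfl
  exacts [hqu rfl, hqv rfl]

theorem exists_deleteEdges_isLinearForest (hC : IsCircleLike C) (hH : H ≤ G)
    (harc : ∀ e ∈ H.edgeSet, D.arc e ⊆ C) :
    ∃ s ⊆ H.edgeSet, s.Subsingleton ∧ (H.deleteEdges s).IsLinearForest := by
  have hdeg : ∀ s v, ((H.deleteEdges s).neighborSet v).ncard ≤ 2 := fun s =>
    D.ncard_neighborSet_le_two hC ((H.deleteEdges_le s).trans hH)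
      fun e he => harc e (edgeSet_mono (H.deleteEdges_le s) he)
  rcases H.edgeSet.eq_empty_or_nonempty with h | ⟨e, he⟩
  · refine ⟨∅, empty_subset _, subsingleton_empty, ?_, hdeg ∅⟩
    rw [deleteEdges_empty, edgeSet_eq_empty.1 h]
    exact isAcyclic_bot
  · exact ⟨{e}, singleton_subset_iff.2 he, subsingleton_singleton,
      D.isAcyclic_deleteEdges_singleton hC hH harc he, hdeg {e}⟩

end CircularArcDrawing

theorem linearArboricity_le_of_circle_cover_general {d : ℕ} {V : Type*}
    (G : SimpleGraph V) (D : CircularArcDrawing d G)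
    (𝒞 : Finset (Set (EuclideanSpace ℝ (Fin d))))
    (hcirc : ∀ C ∈ 𝒞, IsCircle d C) (hcov : D.CoveredBy 𝒞)
    (r : ℕ) (hr : 𝒞.card = r) :
    ∃ (N : ℕ) (H : Fin N → SimpleGraph V),
      N ≤ r + (r + 1) / 2 ∧
      (∀ i, H i ≤ G) ∧
      (∀ i, (H i).IsAcyclic) ∧
      (∀ i v, ((H i).neighborSet v).ncard ≤ 2) ∧
      (∀ e ∈ G.edgeSet, ∃! i, e ∈ (H i).edgeSet) := by
  choose circ hcirc𝒞 harc using hcov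
  let c : G.EdgeLabeling 𝒞 := fun e => ⟨circ e e.2, hcirc𝒞 e e.2⟩
  have hclass : ∀ C : 𝒞, ∃ s ⊆ (c.labelGraph C).edgeSet, s.Subsingleton ∧
      ((c.labelGraph C).deleteEdges s).IsLinearForest := fun C =>
    D.exists_deleteEdges_isLinearForest (hcirc C C.2).isCircleLike c.labelGraph_le fun e he => by
      obtain ⟨heG, rfl⟩ := SimpleGraph.EdgeLabeling.mem_edgeSet_labelGraph.1 he
      exact harc e heG
  choose s hsF hs1 hlin using hclass
  obtain ⟨N, H, hN, hpart, hH⟩ := c.isEdgePartition_labelGraph.exists_isLinearForest hsF hs1 hlin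
  rw [Fintype.card_coe, hr] at hN
  exact ⟨N, H, hN, hpart.1, fun i => (hH i).1, fun i => (hH i).2, hpart.2⟩

/-- If a finite simple graph `G` admits a crossing-free circular-arc drawing in `ℝ^d`
(`d ≥ 2`) covered by a family of `r` circles, then the linear arboricity of `G` is at most
`⌈3r/2⌉ = r + ⌈r/2⌉`: the edge set of `G` can be partitioned into at most `r + ⌈r/2⌉`
linear forests (acyclic subgraphs of maximum degree at most 2). -/
theorem linearArboricity_le_of_circle_cover {d : ℕ} (hd : 2 ≤ d) {V : Type*} [Fintype V]
    (G : SimpleGraph V) (D : CircularArcDrawing d G)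
    (𝒞 : Finset (Set (EuclideanSpace ℝ (Fin d))))
    (hcirc : ∀ C ∈ 𝒞, IsCircle d C) (hcov : D.CoveredBy 𝒞)
    (r : ℕ) (hr : 𝒞.card = r) :
    ∃ (N : ℕ) (H : Fin N → SimpleGraph V),
      N ≤ r + (r + 1) / 2 ∧
      (∀ i, H i ≤ G) ∧
      (∀ i, (H i).IsAcyclic) ∧
      (∀ i v, ((H i).neighborSet v).ncard ≤ 2) ∧
      (∀ e ∈ G.edgeSet, ∃! i, e ∈ (H i).edgeSet) :=
  linearArboricity_le_of_circle_cover_general G D 𝒞 hcirc hcov r hr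
end
end

section
/- Let G be a finite simple graph with a crossing-free circular-arc drawing in ℝ² covered by a family of r circles, and suppose there are k cycles C₁, …, C_k in G whose drawings are nested: writing J_i ⊆ ℝ² for the union of the arcs of the edges of C_i, for each i ∈ {1, …, k−1} the set J_{i+1} is contained in a bounded connected component of ℝ² \ J_i. Then r ≥ k. -/
/-!
Each cycle is drawn as a compact connected curve `J i`. Enclosure in a bounded complementary
component is transitive for such curves (otherwise two bounded open sets would cover the plane by
a clopen argument), so the curves are pairwise disjoint and every outer curve encloses the
innermost one. Through a point `p` of the innermost curve take a line: on each side of `p` it must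
leave the bounded component of the complement of every outer curve, hence meets it. This gives
`2k - 1` distinct collinear points, each on a circle of the cover; three distinct points of a
circle are never collinear, so every circle carries at most two of them and `2k - 1 ≤ 2r`.
-/

open Set

noncomputable section

open Function Bornology EuclideanGeometry

section Spheres

variable {V P : Type*} [NormedAddCommGroup V] [InnerProductSpace ℝ V] [MetricSpace P]
  [NormedAddTorsor V P]

theorem card_le_two_of_collinear_of_cospherical {T : Finset P} (hcol : Collinear ℝ (T : Set P))
    (hcos : Cospherical (T : Set P)) : T.card ≤ 2 := by
  by_contra! h
  obtain ⟨a, ha, b, hb, c, hc, hab, hac, hbc⟩ := Finset.two_lt_card.1 h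
  refine affineIndependent_iff_not_collinear_set.1
    (hcos.affineIndependent_of_mem_of_ne ha hb hc hab hac hbc) (hcol.subset ?_)
  simp [insert_subset_iff, ha, hb, hc]

theorem card_le_two_mul_card_of_collinear {T : Finset P} (hcol : Collinear ℝ (T : Set P))
    (𝒮 : Finset (Set P)) (h𝒮 : ∀ S ∈ 𝒮, Cospherical S) (hT : ∀ x ∈ T, ∃ S ∈ 𝒮, x ∈ S) :
    T.card ≤ 2 * 𝒮.card := by
  classical
  calc T.card ≤ (𝒮.biUnion fun S => T.filter (· ∈ S)).card :=
        Finset.card_le_card fun x hx => by simpa [hx] using hT x hx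
    _ ≤ 𝒮.card * 2 := Finset.card_biUnion_le_card_mul _ _ _ fun S hS =>
        card_le_two_of_collinear_of_cospherical
          (hcol.subset (Finset.coe_subset.2 (Finset.filter_subset _ _)))
          ((h𝒮 S hS).subset fun _ hx => (Finset.mem_filter.1 hx).2)
    _ = 2 * 𝒮.card := mul_comm _ _

end Spheres

theorem IsSphereDim.cospherical {d l : ℕ} {S : Set (EuclideanSpace ℝ (Fin d))}
    (h : IsSphereDim d l S) : Cospherical S := by
  obtain ⟨-, c, r, -, -, -, rfl⟩ := h
  exact ⟨c, r, fun x hx => hx.2⟩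

theorem IsOpen.frontier_connectedComponentIn_subset {X : Type*} [TopologicalSpace X]
    [LocallyConnectedSpace X] {F : Set X} (hF : IsOpen F) (x : X) :
    frontier (connectedComponentIn F x) ⊆ Fᶜ := by
  intro y hy hyF
  have hU : IsOpen (connectedComponentIn F x) := hF.connectedComponentIn
  obtain ⟨z, hzy, hzx⟩ := mem_closure_iff.1 (frontier_subset_closure hy) _
    hF.connectedComponentIn (mem_connectedComponentIn hyF)
  have : connectedComponentIn F x = connectedComponentIn F y := by
    rw [connectedComponentIn_eq hzx, connectedComponentIn_eq hzy]
  rw [hU.frontier_eq, this] at hy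
  exact hy.2 (mem_connectedComponentIn hyF)

theorem subset_connectedComponentIn_of_nonempty_inter {X : Type*}
    [TopologicalSpace X] {s F : Set X} {x : X} (hs : IsPreconnected s) (hsF : s ⊆ F)
    (hne : (s ∩ connectedComponentIn F x).Nonempty) : s ⊆ connectedComponentIn F x := by
  obtain ⟨z, hzs, hzx⟩ := hne
  rw [connectedComponentIn_eq hzx]
  exact hs.subset_connectedComponentIn hzs hsF

def IsEnclosedBy {X : Type*} [TopologicalSpace X] [Bornology X] (B A : Set X) : Prop :=
  ∃ x ∉ A, B ⊆ connectedComponentIn Aᶜ x ∧ IsBounded (connectedComponentIn Aᶜ x)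

theorem IsEnclosedBy.disjoint {X : Type*} [TopologicalSpace X] [Bornology X] {A B : Set X}
    (h : IsEnclosedBy B A) : Disjoint B A := by
  obtain ⟨x, -, hB, -⟩ := h
  exact subset_compl_iff_disjoint_right.1 (hB.trans (connectedComponentIn_subset _ _))

section NormedSpace

variable {E : Type*} [NormedAddCommGroup E] [NormedSpace ℝ E]

theorem IsOpen.exists_pos_add_smul_mem_frontier {U : Set E} (hU : IsOpen U) (hb : IsBounded U)
    {p d : E} (hp : p ∈ U) (hd : d ≠ 0) : ∃ t : ℝ, 0 < t ∧ p + t • d ∈ frontier U := by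
  by_contra! hray
  set R := (fun t : ℝ => p + t • d) '' Ici 0
  have hRU : R ⊆ U := by
    refine (isPreconnected_Ici.image _ (by fun_prop)).subset_of_closure_inter_subset hU
      ⟨p, ⟨0, self_mem_Ici, by simp⟩, hp⟩ ?_
    rintro _ ⟨hcl, t, ht, rfl⟩
    rcases (mem_Ici.1 ht).eq_or_lt with rfl | ht
    · simpa using hp
    · by_contra hnot
      exact hray t ht ⟨hcl, by rwa [hU.interior_eq]⟩
  obtain ⟨M, hM⟩ := isBounded_iff_forall_norm_le.1 hb
  have hdn : 0 < ‖d‖ := norm_pos_iff.2 hd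
  set t := (M + ‖p‖ + 1) / ‖d‖
  have ht : 0 ≤ t := by
    have := (norm_nonneg _).trans (hM p hp)
    positivity
  have hle : ‖p + t • d‖ ≤ M := hM _ (hRU ⟨t, ht, rfl⟩)
  have htd : ‖t • d‖ = M + ‖p‖ + 1 := by
    rw [norm_smul, Real.norm_of_nonneg ht, div_mul_cancel₀ _ hdn.ne']
  have := norm_sub_le (p + t • d) p
  rw [add_sub_cancel_left, htd] at this
  linarith

theorem IsEnclosedBy.exists_pos_add_smul_mem {A B : Set E} (h : IsEnclosedBy B A)
    (hA : IsClosed A) {p d : E} (hp : p ∈ B) (hd : d ≠ 0) :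
    ∃ t : ℝ, 0 < t ∧ p + t • d ∈ A := by
  obtain ⟨x, -, hB, hb⟩ := h
  have hU : IsOpen (connectedComponentIn Aᶜ x) := hA.isOpen_compl.connectedComponentIn
  obtain ⟨t, ht, hfr⟩ := hU.exists_pos_add_smul_mem_frontier hb (hB hp) hd
  exact ⟨t, ht, by simpa using hA.isOpen_compl.frontier_connectedComponentIn_subset x hfr⟩

variable [Nontrivial E]

theorem IsEnclosedBy.trans {A B C : Set E} (hBA : IsEnclosedBy B A) (hCB : IsEnclosedBy C B)
    (hA : IsClosed A) (hA' : IsPreconnected A) (hB : IsClosed B) : IsEnclosedBy C A := by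
  obtain ⟨x, hxA, hBU, hUb⟩ := hBA
  obtain ⟨y, hyB, hCW, hWb⟩ := hCB
  set U := connectedComponentIn Aᶜ x
  set W := connectedComponentIn Bᶜ y
  have hUo : IsOpen U := hA.isOpen_compl.connectedComponentIn
  have hWo : IsOpen W := hB.isOpen_compl.connectedComponentIn
  have hUA : U ⊆ Aᶜ := connectedComponentIn_subset _ _
  have hfU : frontier U ⊆ A := by
    simpa using hA.isOpen_compl.frontier_connectedComponentIn_subset x
  have hfW : frontier W ⊆ B := by
    simpa using hB.isOpen_compl.frontier_connectedComponentIn_subset y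
  suffices hWU : W ⊆ U from ⟨x, hxA, hCW.trans hWU, hUb⟩
  obtain ⟨z, hz⟩ : (frontier W).Nonempty := nonempty_frontier_iff.2
    ⟨⟨y, mem_connectedComponentIn hyB⟩, fun h => NormedSpace.unbounded_univ ℝ E (h ▸ hWb)⟩
  by_cases hAW : (A ∩ W).Nonempty
  · -- then `A ⊆ W`, and `U ∪ W` would be a bounded clopen set
    have hAW : A ⊆ W :=
      subset_connectedComponentIn_of_nonempty_inter hA' (fun a ha hb => hUA (hBU hb) ha) hAW
    have hUW : IsClosed (U ∪ W) := frontier_subset_iff_isClosed.1 <|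
      (frontier_union_subset U W).trans <| union_subset
        (inter_subset_left.trans (hfU.trans (hAW.trans subset_union_right)))
        (inter_subset_right.trans (hfW.trans (hBU.trans subset_union_left)))
    have := IsClopen.eq_univ ⟨hUW, hUo.union hWo⟩ ⟨x, Or.inl (mem_connectedComponentIn hxA)⟩
    exact absurd (this ▸ hUb.union hWb) (NormedSpace.unbounded_univ ℝ E)
  · refine subset_connectedComponentIn_of_nonempty_inter isPreconnected_connectedComponentIn
      (fun w hw hwA => hAW ⟨w, hwA, hw⟩) ?_
    obtain ⟨w, hwU, hwW⟩ := mem_closure_iff.1 (frontier_subset_closure hz) U hUo (hBU (hfW hz))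
    exact ⟨w, hwW, hwU⟩

theorem isEnclosedBy_of_lt {k : ℕ} {J : Fin k → Set E} (hclosed : ∀ i, IsClosed (J i))
    (hconn : ∀ i, IsPreconnected (J i))
    (hstep : ∀ (i : ℕ) (h : i + 1 < k), IsEnclosedBy (J ⟨i + 1, h⟩) (J ⟨i, Nat.lt_of_succ_lt h⟩))
    {i j : Fin k} (hij : i < j) : IsEnclosedBy (J j) (J i) := by
  obtain ⟨i, hi⟩ := i
  obtain ⟨j, hj⟩ := j
  rw [Fin.mk_lt_mk] at hij
  induction j, hij using Nat.le_induction with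
  | base => exact hstep i hj
  | succ j hij ih => exact (ih (by omega)).trans (hstep j hj) (hclosed _) (hconn _) (hclosed _)

theorem pairwise_disjoint_of_isEnclosedBy {k : ℕ} {J : Fin k → Set E}
    (hclosed : ∀ i, IsClosed (J i)) (hconn : ∀ i, IsPreconnected (J i))
    (hstep : ∀ (i : ℕ) (h : i + 1 < k), IsEnclosedBy (J ⟨i + 1, h⟩) (J ⟨i, Nat.lt_of_succ_lt h⟩)) :
    Pairwise (Disjoint on J) := by
  intro i j hij
  rcases hij.lt_or_gt with h | h
  · exact (isEnclosedBy_of_lt hclosed hconn hstep h).disjoint.symm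
  · exact (isEnclosedBy_of_lt hclosed hconn hstep h).disjoint

theorem exists_collinear_finset_of_isEnclosedBy {n : ℕ} {J : Fin (n + 1) → Set E}
    (hclosed : ∀ i, IsClosed (J i)) (hconn : ∀ i, IsPreconnected (J i))
    (hstep : ∀ (i : ℕ) (h : i + 1 < n + 1),
      IsEnclosedBy (J ⟨i + 1, h⟩) (J ⟨i, Nat.lt_of_succ_lt h⟩))
    (hne : (J (Fin.last n)).Nonempty) :
    ∃ T : Finset E, 2 * n + 1 ≤ T.card ∧ Collinear ℝ (T : Set E) ∧ ∀ x ∈ T, ∃ i, x ∈ J i := by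
  classical
  obtain ⟨p, hp⟩ := hne
  obtain ⟨d, hd⟩ := exists_ne (0 : E)
  have hdisj := pairwise_disjoint_of_isEnclosedBy hclosed hconn hstep
  have hhit : ∀ (i : Fin n) (b : Bool),
      ∃ τ : ℝ, b = decide (0 < τ) ∧ p + τ • d ∈ J i.castSucc := by
    intro i b
    have henc := isEnclosedBy_of_lt hclosed hconn hstep (Fin.castSucc_lt_last i)
    cases b
    · obtain ⟨t, ht, htJ⟩ := henc.exists_pos_add_smul_mem (hclosed _) hp (neg_ne_zero.2 hd)
      exact ⟨-t, by simpa using ht.le, by simpa using htJ⟩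
    · obtain ⟨t, ht, htJ⟩ := henc.exists_pos_add_smul_mem (hclosed _) hp hd
      exact ⟨t, by simpa using ht, htJ⟩
  choose τ hτ hτJ using hhit
  -- `none` stands for `p`, and `some (i, b)` for the point of `J i` on the side `b` of `p`
  let f : Option (Fin n × Bool) → ℝ := fun a => a.elim 0 fun ib => τ ib.1 ib.2
  let idx : Option (Fin n × Bool) → Fin (n + 1) :=
    fun a => a.elim (Fin.last n) fun ib => ib.1.castSucc
  have hfJ : ∀ a, p + f a • d ∈ J (idx a) := by
    rintro (_ | ⟨i, b⟩)
    · simpa [f, idx] using hp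
    · exact hτJ i b
  have hf : Injective fun a => p + f a • d := by
    intro a a' h
    have hidx : idx a = idx a' := by
      by_contra hne
      exact (hdisj hne).ne_of_mem (hfJ a) (hfJ a') h
    have hfa : f a = f a' := smul_left_injective ℝ hd (add_left_cancel h)
    rcases a with _ | ⟨i, b⟩ <;> rcases a' with _ | ⟨i', b'⟩
    · rfl
    · exact absurd hidx (Fin.castSucc_lt_last i').ne'
    · exact absurd hidx (Fin.castSucc_lt_last i).ne
    · obtain rfl : i = i' := Fin.castSucc_injective _ hidx
      obtain rfl : b = b' :=
        (hτ i b).trans ((congrArg (fun t => decide (0 < t)) hfa).trans (hτ i b').symm)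
      rfl
  refine ⟨Finset.univ.image fun a => p + f a • d, ?_, ?_, ?_⟩
  · rw [Finset.card_image_of_injective _ hf]
    simp only [Finset.card_univ, Fintype.card_option, Fintype.card_prod, Fintype.card_fin,
      Fintype.card_bool]
    omega
  · refine (collinear_iff_exists_forall_eq_smul_vadd _).2 ⟨p, d, ?_⟩
    simpa [add_comm] using fun a => ⟨f a, rfl⟩
  · simpa using fun a => ⟨_, hfJ a⟩

end NormedSpace

namespace CircularArcDrawing

variable {d : ℕ} {V : Type*} {G : SimpleGraph V} (D : CircularArcDrawing d G)

theorem isCompact_biUnion_arc {u w : V} (p : G.Walk u w) :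
    IsCompact (⋃ e ∈ p.edges, D.arc e) :=
  p.edges.finite_toSet.isCompact_biUnion fun e he =>
    (D.arc_isArc e (p.edges_subset_edgeSet he)).choose_spec.2.2.1

theorem pos_mem_biUnion_arc {u w : V} (p : G.Walk u w) (hp : ¬p.Nil) :
    D.pos u ∈ ⋃ e ∈ p.edges, D.arc e := by
  cases p with
  | nil => exact absurd .nil hp
  | cons h q => exact mem_biUnion List.mem_cons_self (D.endpoint_mem _ h _ (Sym2.mem_mk_left _ _))

theorem isConnected_biUnion_arc {u w : V} (p : G.Walk u w) (hp : ¬p.Nil) :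
    IsConnected (⋃ e ∈ p.edges, D.arc e) := by
  induction p with
  | nil => exact absurd .nil hp
  | @cons a b _ h q ih =>
    have harc := (D.arc_isArc s(a, b) h).choose_spec.2.2.2
    simp only [SimpleGraph.Walk.edges_cons, List.mem_cons, iUnion_or, iUnion_union_distrib,
      iUnion_iUnion_eq_left]
    by_cases hq : q.Nil
    · simpa [SimpleGraph.Walk.edges_eq_nil.2 hq] using harc
    · exact IsConnected.union ⟨D.pos b, D.endpoint_mem _ h _ (Sym2.mem_mk_right _ _),
        D.pos_mem_biUnion_arc q hq⟩ harc (ih hq)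

end CircularArcDrawing

/-- A crossing-free circular-arc drawing in `ℝ²` of a graph containing `k` nested cycles
cannot be covered by fewer than `k` circles.  Here the cycles `c 0, …, c (k-1)` are nested
in the sense that, writing `J i` for the union of the arcs of the edges of the `i`-th
cycle, the set `J (i+1)` is contained in a bounded connected component of the complement
of `J i`. -/
theorem nested_cycles_circle_cover_lower_bound {V : Type*} (G : SimpleGraph V)
    (D : CircularArcDrawing 2 G) (𝒞 : Finset (Set (EuclideanSpace ℝ (Fin 2))))
    (hcirc : ∀ C ∈ 𝒞, IsCircle 2 C) (hcov : D.CoveredBy 𝒞)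
    (k : ℕ) (v : Fin k → V) (c : ∀ i : Fin k, G.Walk (v i) (v i))
    (hc : ∀ i, (c i).IsCycle)
    (J : Fin k → Set (EuclideanSpace ℝ (Fin 2)))
    (hJ : ∀ i, J i = ⋃ e ∈ (c i).edges, D.arc e)
    (hnested : ∀ (i : ℕ) (h : i + 1 < k),
      ∃ x ∉ J ⟨i, by omega⟩,
        J ⟨i + 1, h⟩ ⊆ connectedComponentIn (J ⟨i, by omega⟩)ᶜ x ∧
        Bornology.IsBounded (connectedComponentIn (J ⟨i, by omega⟩)ᶜ x)) :
    k ≤ 𝒞.card := by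
  obtain _ | n := k
  · exact Nat.zero_le _
  have hclosed : ∀ i, IsClosed (J i) := fun i => hJ i ▸ (D.isCompact_biUnion_arc (c i)).isClosed
  have hconn : ∀ i, IsConnected (J i) := fun i =>
    hJ i ▸ D.isConnected_biUnion_arc (c i) (hc i).not_nil
  obtain ⟨T, hT, hcol, hTJ⟩ := exists_collinear_finset_of_isEnclosedBy hclosed
    (fun i => (hconn i).isPreconnected) hnested (hconn _).nonempty
  have hT𝒞 : ∀ x ∈ T, ∃ C ∈ 𝒞, x ∈ C := by
    intro x hx
    obtain ⟨i, hi⟩ := hTJ x hx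
    rw [hJ, mem_iUnion₂] at hi
    obtain ⟨e, he, hxe⟩ := hi
    obtain ⟨C, hC, hsub⟩ := hcov e ((c i).edges_subset_edgeSet he)
    exact ⟨C, hC, hsub hxe⟩
  have := card_le_two_mul_card_of_collinear hcol 𝒞 (fun C hC => (hcirc C hC).cospherical) hT𝒞
  omega
end
end

section
/- Let 1 ≤ l < d and let G be a finite simple graph that admits a crossing-free straight-line drawing in ℝ^d whose edge segments are contained in the union of r affine subspaces of dimension l. Then G admits a crossing-free circular-arc drawing in ℝ^d whose arcs are contained in the union of r spheres of dimension l. In particular, σ^l_d(G) ≤ ρ^l_d(G). -/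
open Set

noncomputable section

/-!
Invert in a point `c` that lies on none of the `r` flats (a finite union of proper flats is
Lebesgue-null). Each flat `A` lies in the perpendicular bisector of `c` and its mirror image in `A`,
so inversion in `c` maps `A` into an `l`-sphere of the `(l+1)`-flat spanned by `A` and `c`. An
edge segment covered by finitely many flats lies in one of them, so `c` is off every edge line and
the inverted segments are circular arcs; inversion is injective, so the drawing stays crossing-free.
-/

open EuclideanGeometry MeasureTheory

section Inversion

variable {V P : Type*} [NormedAddCommGroup V] [InnerProductSpace ℝ V] [MetricSpace P]
  [NormedAddTorsor V P]

theorem image_inversion_affineSubspace_subset_sphere {s : AffineSubspace ℝ P} [Nonempty s]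
    [s.direction.HasOrthogonalProjection] {c : P} {R : ℝ} (hR : R ≠ 0) (hc : c ∉ s) :
    inversion c R '' s ⊆
      Metric.sphere (inversion c R (reflection s c)) (R ^ 2 / dist (reflection s c) c) := by
  have hs : (s : Set P) ⊆ AffineSubspace.perpBisector c (reflection s c) := fun x hx =>
    AffineSubspace.mem_perpBisector_iff_dist_eq.mpr (dist_reflection_eq_of_mem s hx c).symm
  have hne : reflection s c ≠ c := mt (reflection_eq_self_iff c).mp hc
  exact (image_mono hs).trans ((image_inversion_perpBisector hR hne).subset.trans sdiff_subset)

end Inversion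

theorem finrank_direction_affineSpan_insert {k V P : Type*} [DivisionRing k] [AddCommGroup V]
    [Module k V] [AddTorsor V P] {s : AffineSubspace k P} [FiniteDimensional k s.direction]
    {p₀ p : P} (hp₀ : p₀ ∈ s) (hp : p ∉ s) :
    Module.finrank k (affineSpan k (insert p (s : Set P))).direction =
      Module.finrank k s.direction + 1 := by
  have hv : p -ᵥ p₀ ∉ s.direction := fun h =>
    hp (by simpa using AffineSubspace.vadd_mem_of_mem_direction h hp₀)
  have hv0 : p -ᵥ p₀ ≠ 0 := fun h => hv (h ▸ s.direction.zero_mem)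
  have hdisj : Disjoint (k ∙ (p -ᵥ p₀)) s.direction :=
    (Submodule.disjoint_span_singleton' hv0).mpr hv |>.symm
  have := Submodule.finrank_sup_add_finrank_inf_eq (k ∙ (p -ᵥ p₀)) s.direction
  rw [hdisj.eq_bot, finrank_bot, add_zero, finrank_span_singleton hv0] at this
  rw [AffineSubspace.direction_affineSpan_insert hp₀, this, add_comm]

theorem exists_forall_notMem_of_ne_top {E : Type*} [NormedAddCommGroup E] [NormedSpace ℝ E]
    [FiniteDimensional ℝ E] (𝒜 : Finset (AffineSubspace ℝ E)) (h𝒜 : ∀ A ∈ 𝒜, A ≠ ⊤) :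
    ∃ c, ∀ A ∈ 𝒜, c ∉ A := by
  borelize E
  by_contra! h
  have hnull : Measure.addHaar (⋃ A ∈ 𝒜, (A : Set E)) = 0 :=
    (measure_biUnion_null_iff 𝒜.countable_toSet).mpr fun A hA =>
      Measure.addHaar_affineSubspace _ A (h𝒜 A hA)
  have huniv : ⋃ A ∈ 𝒜, (A : Set E) = univ :=
    eq_univ_of_forall fun c => by simpa using h c
  exact isOpen_univ.measure_ne_zero Measure.addHaar univ_nonempty (huniv ▸ hnull)

theorem segment_subset_affineSpan_pair {k E : Type*} [Field k] [LinearOrder k]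
    [IsStrictOrderedRing k] [AddCommGroup E] [Module k E] {a b : E} :
    segment k a b ⊆ line[k, a, b] :=
  (line[k, a, b]).convex.segment_subset (left_mem_affineSpan_pair k a b)
    (right_mem_affineSpan_pair k a b)

theorem exists_affineSpan_pair_le_of_segment_subset_biUnion {k E ι : Type*} [Field k]
    [LinearOrder k] [IsStrictOrderedRing k] [AddCommGroup E] [Module k E]
    {𝒜 : Finset ι} {A : ι → AffineSubspace k E} {a b : E} (hab : a ≠ b)
    (h : segment k a b ⊆ ⋃ i ∈ 𝒜, (A i : Set E)) :
    ∃ i ∈ 𝒜, line[k, a, b] ≤ A i := by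
  have hinf : (segment k a b).Infinite := by
    rw [segment_eq_image_lineMap]
    exact (Icc_infinite zero_lt_one).image (AffineMap.lineMap_injective k hab).injOn
  obtain ⟨i, hi, hiinf⟩ : ∃ i ∈ 𝒜, (segment k a b ∩ A i).Infinite := by
    by_contra! hfin
    refine hinf ((𝒜.finite_toSet.biUnion hfin).subset fun x hx => ?_)
    obtain ⟨i, hi, hxi⟩ := mem_iUnion₂.mp (h hx)
    exact mem_biUnion hi ⟨hx, hxi⟩
  obtain ⟨x, ⟨hxs, hxA⟩, y, ⟨hys, hyA⟩, hxy⟩ := hiinf.nontrivial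
  refine ⟨i, hi, ?_⟩
  rw [← affineSpan_pair_eq_of_mem_of_mem_of_ne (segment_subset_affineSpan_pair hxs)
    (segment_subset_affineSpan_pair hys) hxy]
  exact affineSpan_pair_le_of_mem_of_mem hxA hyA

section EuclideanSpace

variable {d : ℕ}

theorem exists_isSphereDim_image_inversion_subset {l : ℕ}
    {A : AffineSubspace ℝ (EuclideanSpace ℝ (Fin d))} (hA : Module.finrank ℝ A.direction = l)
    (hne : (A : Set (EuclideanSpace ℝ (Fin d))).Nonempty) {c : EuclideanSpace ℝ (Fin d)}
    (hc : c ∉ A) : ∃ S, IsSphereDim d l S ∧ inversion c 1 '' A ⊆ S := by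
  obtain ⟨p₀, hp₀⟩ := hne
  have : Nonempty A := ⟨⟨p₀, hp₀⟩⟩
  set Q := affineSpan ℝ (insert c (A : Set (EuclideanSpace ℝ (Fin d))))
  have hcQ : c ∈ Q := mem_affineSpan ℝ (mem_insert _ _)
  have hAQ : A ≤ Q := (subset_insert _ _).trans (subset_affineSpan ℝ _)
  have hQ : MapsTo (inversion c 1) Q Q := mapsTo_inversion_affineSubspace_of_mem hcQ
  set z := inversion c 1 (reflection A c)
  set ρ := 1 ^ 2 / dist (reflection A c) c
  refine ⟨{x | x ∈ Q ∧ dist x z = ρ},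
    ⟨Q, z, ρ, ?_, hQ (reflection_mem_of_le_of_mem hAQ hcQ), ?_, rfl⟩, ?_⟩
  · rw [finrank_direction_affineSpan_insert hp₀ hc, hA]
  · exact div_pos (pow_pos one_pos 2) (dist_pos.mpr (mt (reflection_eq_self_iff c).mp hc))
  · rintro _ ⟨x, hx, rfl⟩
    exact ⟨hQ (hAQ hx), image_inversion_affineSubspace_subset_sphere one_ne_zero hc ⟨x, hx, rfl⟩⟩

theorem isArc_image_inversion_segment {a b c : EuclideanSpace ℝ (Fin d)} (hab : a ≠ b)
    (hc : c ∉ line[ℝ, a, b]) : IsArc d (inversion c 1 '' segment ℝ a b) := by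
  have hline : Module.finrank ℝ (line[ℝ, a, b]).direction = 1 := by
    rw [direction_affineSpan, vectorSpan_pair, finrank_span_singleton (vsub_ne_zero.mpr hab)]
  obtain ⟨C, hC, hAC⟩ :=
    exists_isSphereDim_image_inversion_subset hline ⟨a, left_mem_affineSpan_pair ℝ a b⟩ hc
  have hcpt : IsCompact (segment ℝ a b) :=
    convexHull_pair (𝕜 := ℝ) a b ▸ (toFinite {a, b}).isCompact_convexHull ℝ
  have hcont : ContinuousOn (inversion c 1) (segment ℝ a b) :=
    continuousOn_const.inversion continuousOn_const continuousOn_id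
      fun x hx hxc => hc (hxc ▸ segment_subset_affineSpan_pair hx)
  exact ⟨C, hC, (image_mono segment_subset_affineSpan_pair).trans hAC, hcpt.image_of_continuousOn hcont,
    ((convex_segment a b).isConnected ⟨a, left_mem_segment ℝ a b⟩).image _ hcont⟩

namespace StraightLineDrawing

variable {V : Type*} {G : SimpleGraph V}

def inversion (D : StraightLineDrawing d G) (c : EuclideanSpace ℝ (Fin d))
    (hc : ∀ u v, G.Adj u v → c ∉ line[ℝ, D.pos u, D.pos v]) : CircularArcDrawing d G where
  pos := EuclideanGeometry.inversion c 1 ∘ D.pos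
  inj := (inversion_injective c one_ne_zero).comp D.inj
  arc := Sym2.lift ⟨fun u v => EuclideanGeometry.inversion c 1 '' segment ℝ (D.pos u) (D.pos v),
    fun u v => by simp only [segment_symm]⟩
  arc_isArc e he := by
    induction e using Sym2.ind with
    | _ u v => exact isArc_image_inversion_segment (D.inj.ne he.ne) (hc u v he)
  endpoint_mem e _ w hw := by
    induction e using Sym2.ind with
    | _ u v =>
      rcases Sym2.mem_iff.mp hw with rfl | rfl
      · exact mem_image_of_mem _ (left_mem_segment ℝ _ _)
      · exact mem_image_of_mem _ (right_mem_segment ℝ _ _)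
  crossFree e he f hf hef := by
    induction e using Sym2.ind with
    | _ u v =>
      induction f using Sym2.ind with
      | _ x y =>
        have hends : {w | w ∈ s(u, v) ∧ w ∈ s(x, y)} = ({u, v} ∩ {x, y} : Set V) := by
          ext w; simp [Sym2.mem_iff]
        simp only [Sym2.lift_mk]
        rw [← image_inter (inversion_injective c one_ne_zero), D.crossFree u v x y he hf hef,
          hends, image_comp]
  vertex_mem e he w hw := by
    induction e using Sym2.ind with
    | _ u v =>
      obtain ⟨x, hx, hxw⟩ := hw
      rw [inversion_injective c one_ne_zero hxw] at hx
      rcases D.vertex_mem u v w he hx with rfl | rfl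
      · exact Sym2.mem_mk_left _ _
      · exact Sym2.mem_mk_right _ _

@[simp]
theorem inversion_arc_mk (D : StraightLineDrawing d G) (c : EuclideanSpace ℝ (Fin d))
    (hc : ∀ u v, G.Adj u v → c ∉ line[ℝ, D.pos u, D.pos v]) (u v : V) :
    (D.inversion c hc).arc s(u, v) =
      EuclideanGeometry.inversion c 1 '' segment ℝ (D.pos u) (D.pos v) :=
  rfl

end StraightLineDrawing

end EuclideanSpace

theorem sphere_cover_le_affine_cover_general (l d : ℕ) (hl : 1 ≤ l) (hld : l < d)
    {V : Type*} (G : SimpleGraph V) (r : ℕ)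
    (D : StraightLineDrawing d G)
    (𝒜 : Finset (AffineSubspace ℝ (EuclideanSpace ℝ (Fin d))))
    (hcard : 𝒜.card = r)
    (hdim : ∀ A ∈ 𝒜, Module.finrank ℝ A.direction = l)
    (hcov : ∀ u v : V, G.Adj u v →
      segment ℝ (D.pos u) (D.pos v)
        ⊆ ⋃ A ∈ 𝒜, (A : Set (EuclideanSpace ℝ (Fin d)))) :
    ∃ (D' : CircularArcDrawing d G) (𝒮 : Finset (Set (EuclideanSpace ℝ (Fin d)))),
      (∀ S ∈ 𝒮, IsSphereDim d l S) ∧ 𝒮.card ≤ r ∧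
      ∀ e ∈ G.edgeSet, D'.arc e ⊆ ⋃ S ∈ 𝒮, S := by
  have hne : ∀ A ∈ 𝒜, (A : Set (EuclideanSpace ℝ (Fin d))).Nonempty := fun A hA =>
    (AffineSubspace.nonempty_iff_ne_bot A).mpr fun h => by
      have := hdim A hA
      rw [h, AffineSubspace.direction_bot, finrank_bot] at this
      omega
  have hproper : ∀ A ∈ 𝒜, A ≠ ⊤ := fun A hA h => by
    have := hdim A hA
    rw [h, AffineSubspace.direction_top, finrank_top, finrank_euclideanSpace_fin] at this
    omega
  obtain ⟨c, hc⟩ := exists_forall_notMem_of_ne_top 𝒜 hproper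
  have hline : ∀ u v, G.Adj u v → c ∉ line[ℝ, D.pos u, D.pos v] := fun u v huv hcuv => by
    obtain ⟨A, hA, hle⟩ :=
      exists_affineSpan_pair_le_of_segment_subset_biUnion (D.inj.ne huv.ne) (hcov u v huv)
    exact hc A hA (hle hcuv)
  choose! S hS hAS using fun A hA =>
    exists_isSphereDim_image_inversion_subset (hdim A hA) (hne A hA) (hc A hA)
  refine ⟨D.inversion c hline, 𝒜.image S, by simpa using hS, hcard ▸ Finset.card_image_le, ?_⟩
  intro e he
  induction e using Sym2.ind with
  | _ u v =>
    rw [StraightLineDrawing.inversion_arc_mk]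
    refine (image_mono (hcov u v he)).trans ?_
    simp only [image_iUnion₂, Finset.set_biUnion_finset_image]
    exact biUnion_mono subset_rfl fun A hA => hAS A hA

/-- Let `1 ≤ l < d`.  If a finite simple graph `G` admits a crossing-free straight-line
drawing in `ℝ^d` whose edge segments are contained in the union of `r` affine subspaces of
dimension `l`, then `G` admits a crossing-free circular-arc drawing in `ℝ^d` whose arcs
are contained in the union of `r` spheres of dimension `l`.
In particular, `σ^l_d(G) ≤ ρ^l_d(G)`. -/
theorem sphere_cover_le_affine_cover (l d : ℕ) (hl : 1 ≤ l) (hld : l < d)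
    {V : Type*} [Fintype V] (G : SimpleGraph V) (r : ℕ)
    (D : StraightLineDrawing d G)
    (𝒜 : Finset (AffineSubspace ℝ (EuclideanSpace ℝ (Fin d))))
    (hcard : 𝒜.card = r)
    (hdim : ∀ A ∈ 𝒜, Module.finrank ℝ A.direction = l)
    (hcov : ∀ u v : V, G.Adj u v →
      segment ℝ (D.pos u) (D.pos v)
        ⊆ ⋃ A ∈ 𝒜, (A : Set (EuclideanSpace ℝ (Fin d)))) :
    ∃ (D' : CircularArcDrawing d G) (𝒮 : Finset (Set (EuclideanSpace ℝ (Fin d)))),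
      (∀ S ∈ 𝒮, IsSphereDim d l S) ∧ 𝒮.card ≤ r ∧
      ∀ e ∈ G.edgeSet, D'.arc e ⊆ ⋃ S ∈ 𝒮, S :=
  sphere_cover_le_affine_cover_general l d hl hld G r D 𝒜 hcard hdim hcov
end
end
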